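/- arXiv:2112.10599 — 10 statements merged into one kernel-verified Lean document; each statement's English description precedes it below -/
import Mathlib

section
/- Let (Ω, F, P) be a probability space with a filtration F_0 ⊆ F_1 ⊆ … ⊆ F_K, and let Y_1, …, Y_K be real random variables such that each Y_k is F_k-measurable and square-integrable, E[Y_k | F_{k−1}] = 0 almost surely, and Y_k ≤ R almost surely for a constant R > 0. Then for every δ ∈ (0,1) and every λ ∈ (0, 1/R], with probability at least 1 − δ, ∑_{k=1}^K Y_k ≤ λ·∑_{k=1}^K E[Y_k² | F_{k−1}] + ln(1/δ)/λ. -/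
open MeasureTheory ProbabilityTheory Finset

lemma exp_le_one_add_add_sq {x : ℝ} (hx : x ≤ 1) : Real.exp x ≤ 1 + x + x ^ 2 := by
  rcases le_or_gt (-1) x with h | h
  · have habs : |x| ≤ 1 := abs_le.2 ⟨h, hx⟩
    have hb := Real.exp_bound habs (n := 2) (by norm_num)
    norm_num [Nat.factorial] at hb
    have h2 : ∑ m ∈ Finset.range 2, x ^ m / m.factorial = 1 + x := by
      simp [Finset.sum_range_succ]
    rw [h2] at hb
    have hb2 := (abs_sub_le_iff.1 hb).1
    have hsq : |x| ^ 2 = x ^ 2 := sq_abs x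
    nlinarith [sq_nonneg x]
  · have h1 : Real.exp x < 1 := Real.exp_lt_one_iff.2 (by linarith)
    nlinarith

/-- Bernstein-type concentration for a martingale difference sequence
(Lemma 9 of Jin et al., as used in Lemma `lem:MDS` of the paper):
if `Y 1, …, Y K` is a martingale difference sequence w.r.t. the filtration `ℱ`,
each `Y k` is square-integrable and bounded above by `R` a.s., then for any
`δ ∈ (0,1)` and `lam ∈ (0, 1/R]`, with probability at least `1 - δ`,
`∑ k, Y k ≤ lam * ∑ k, E[(Y k)^2 | ℱ (k-1)] + log (1/δ) / lam`. -/
theorem mds_bernstein_bound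
    {Ω : Type*} {m0 : MeasurableSpace Ω} {μ : Measure Ω} [IsProbabilityMeasure μ]
    {K : ℕ} (ℱ : Filtration ℕ m0)
    (Y : ℕ → Ω → ℝ) (R : ℝ) (hR : 0 < R)
    (hmeas : ∀ k ∈ Finset.Icc 1 K, StronglyMeasurable[ℱ k] (Y k))
    (hL2 : ∀ k ∈ Finset.Icc 1 K, MemLp (Y k) 2 μ)
    (hmds : ∀ k ∈ Finset.Icc 1 K, μ[Y k | ℱ (k - 1)] =ᵐ[μ] 0)
    (hbdd : ∀ k ∈ Finset.Icc 1 K, ∀ᵐ ω ∂μ, Y k ω ≤ R)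
    (δ lam : ℝ) (hδ : δ ∈ Set.Ioo (0 : ℝ) 1) (hlam : lam ∈ Set.Ioc (0 : ℝ) (1 / R)) :
    ENNReal.ofReal (1 - δ) ≤
      μ {ω | ∑ k ∈ Finset.Icc 1 K, Y k ω ≤
        lam * ∑ k ∈ Finset.Icc 1 K, (μ[fun ω' => (Y k ω') ^ 2 | ℱ (k - 1)]) ω
          + Real.log (1 / δ) / lam} := by
  obtain ⟨hδ0, hδ1⟩ := hδ
  obtain ⟨hlam0, hlamR⟩ := hlam
  have hlamR' : lam * R ≤ 1 := by
    rw [div_eq_mul_inv, one_mul] at hlamR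
    calc lam * R ≤ R⁻¹ * R := by nlinarith
    _ = 1 := inv_mul_cancel₀ hR.ne'
  set W : ℕ → Ω → ℝ := fun k => μ[fun ω' => (Y k ω') ^ 2 | ℱ (k - 1)] with hWdef
  -- properties of W
  have hW_nonneg : ∀ k, 0 ≤ᵐ[μ] W k := fun k =>
    condExp_nonneg (ae_of_all _ fun ω => sq_nonneg _)
  have hW_meas : ∀ k, StronglyMeasurable[ℱ (k - 1)] (W k) := fun k => stronglyMeasurable_condExp
  -- the exponential increments
  set X : ℕ → Ω → ℝ := fun k ω => Real.exp (lam * Y k ω - lam ^ 2 * W k ω) with hXdef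
  have hX_meas : ∀ k ∈ Finset.Icc 1 K, StronglyMeasurable (X k) := by
    intro k hk
    exact (Real.continuous_exp.comp_stronglyMeasurable
      ((((hmeas k hk).mono (ℱ.le k)).const_mul lam).sub
        (((hW_meas k).mono (ℱ.le (k - 1))).const_mul (lam ^ 2))))
  have hX_pos : ∀ k ω, 0 < X k ω := fun k ω => Real.exp_pos _
  have hX_le : ∀ k ∈ Finset.Icc 1 K, ∀ᵐ ω ∂μ, X k ω ≤ Real.exp 1 := by
    intro k hk
    filter_upwards [hbdd k hk, hW_nonneg k] with ω h1 h2
    simp only [Pi.zero_apply] at h2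
    apply Real.exp_le_exp.2
    nlinarith [mul_nonneg (sq_nonneg lam) h2]
  have hX_int : ∀ k ∈ Finset.Icc 1 K, Integrable (X k) μ := by
    intro k hk
    refine Integrable.mono' (integrable_const (Real.exp 1))
      (hX_meas k hk).aestronglyMeasurable ?_
    filter_upwards [hX_le k hk] with ω h
    rw [Real.norm_eq_abs, abs_of_pos (hX_pos k ω)]; exact h
  -- key conditional bound
  have hXcond : ∀ k ∈ Finset.Icc 1 K, μ[X k | ℱ (k - 1)] ≤ᵐ[μ] fun _ => 1 := by
    intro k hk
    set E : Ω → ℝ := fun ω => Real.exp (lam * Y k ω) with hEdef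
    have hE_meas : StronglyMeasurable E :=
      Real.continuous_exp.comp_stronglyMeasurable (((hmeas k hk).mono (ℱ.le k)).const_mul lam)
    have hE_le : ∀ᵐ ω ∂μ, E ω ≤ Real.exp 1 := by
      filter_upwards [hbdd k hk] with ω h1
      exact Real.exp_le_exp.2 (by nlinarith)
    have hE_int : Integrable E μ := by
      refine Integrable.mono' (integrable_const (Real.exp 1)) hE_meas.aestronglyMeasurable ?_
      filter_upwards [hE_le] with ω h
      rw [Real.norm_eq_abs, abs_of_pos (Real.exp_pos _)]; exact h
    have hY_int : Integrable (Y k) μ := (hL2 k hk).integrable one_le_two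
    have hY2_int : Integrable (fun ω => Y k ω ^ 2) μ := (hL2 k hk).integrable_sq
    set RHS : Ω → ℝ := (fun _ => (1 : ℝ)) + lam • Y k + lam ^ 2 • (fun ω => Y k ω ^ 2) with hRHSdef
    have hRHS_int : Integrable RHS μ :=
      ((integrable_const 1).add (hY_int.smul lam)).add (hY2_int.smul (lam ^ 2))
    have step1 : E ≤ᵐ[μ] RHS := by
      filter_upwards [hbdd k hk] with ω h1
      have hx : lam * Y k ω ≤ 1 := by nlinarith
      have := exp_le_one_add_add_sq hx
      simp only [hRHSdef, hEdef, Pi.add_apply, Pi.smul_apply, smul_eq_mul]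
      nlinarith
    have step2 : μ[E | ℱ (k - 1)] ≤ᵐ[μ] μ[RHS | ℱ (k - 1)] := condExp_mono hE_int hRHS_int step1
    have step3 : μ[RHS | ℱ (k - 1)] =ᵐ[μ] fun ω => 1 + lam ^ 2 * W k ω := by
      have h1 : μ[RHS | ℱ (k - 1)] =ᵐ[μ]
          μ[(fun _ => (1 : ℝ)) + lam • Y k | ℱ (k - 1)]
            + μ[lam ^ 2 • (fun ω => Y k ω ^ 2) | ℱ (k - 1)] :=
        condExp_add ((integrable_const 1).add (hY_int.smul lam)) (hY2_int.smul (lam ^ 2)) _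
      have h2 : μ[(fun _ => (1 : ℝ)) + lam • Y k | ℱ (k - 1)] =ᵐ[μ]
          μ[(fun _ => (1 : ℝ)) | ℱ (k - 1)] + μ[lam • Y k | ℱ (k - 1)] :=
        condExp_add (integrable_const 1) (hY_int.smul lam) _
      have h3 : μ[(fun _ => (1 : ℝ)) | ℱ (k - 1)] = fun _ => (1 : ℝ) :=
        condExp_const (ℱ.le (k - 1)) 1
      have h4 : μ[lam • Y k | ℱ (k - 1)] =ᵐ[μ] lam • μ[Y k | ℱ (k - 1)] := condExp_smul lam (Y k) _
      have h5 : μ[lam ^ 2 • (fun ω => Y k ω ^ 2) | ℱ (k - 1)] =ᵐ[μ]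
          lam ^ 2 • μ[(fun ω => Y k ω ^ 2) | ℱ (k - 1)] := condExp_smul (lam ^ 2) _ _
      filter_upwards [h1, h2, h4, h5, hmds k hk] with ω e1 e2 e4 e5 e0
      simp only [Pi.add_apply, Pi.smul_apply, smul_eq_mul] at *
      rw [e1, e2, e4, e5, h3, e0]
      simp [hWdef]
    have hEcond : μ[E | ℱ (k - 1)] ≤ᵐ[μ] fun ω => Real.exp (lam ^ 2 * W k ω) := by
      filter_upwards [step2, step3] with ω h1 h2
      calc (μ[E | ℱ (k - 1)]) ω ≤ (μ[RHS | ℱ (k - 1)]) ω := h1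
      _ = 1 + lam ^ 2 * W k ω := h2
      _ ≤ Real.exp (lam ^ 2 * W k ω) := by
          have := Real.add_one_le_exp (lam ^ 2 * W k ω); linarith
    -- pull out the W factor
    set f : Ω → ℝ := fun ω => Real.exp (-(lam ^ 2 * W k ω)) with hfdef
    have hf_meas : StronglyMeasurable[ℱ (k - 1)] f :=
      Real.continuous_exp.comp_stronglyMeasurable ((hW_meas k).const_mul (lam ^ 2)).neg
    have hXfE : X k = f * E := by
      funext ω
      simp only [hXdef, hfdef, hEdef, Pi.mul_apply, ← Real.exp_add]
      ring_nf
    have hpull : μ[X k | ℱ (k - 1)] =ᵐ[μ] f * μ[E | ℱ (k - 1)] := by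
      rw [hXfE]
      exact condExp_mul_of_stronglyMeasurable_left hf_meas (hXfE ▸ hX_int k hk) hE_int
    filter_upwards [hpull, hEcond] with ω h1 h2
    rw [h1]
    simp only [Pi.mul_apply, hfdef]
    calc Real.exp (-(lam ^ 2 * W k ω)) * (μ[E | ℱ (k - 1)]) ω
        ≤ Real.exp (-(lam ^ 2 * W k ω)) * Real.exp (lam ^ 2 * W k ω) :=
          mul_le_mul_of_nonneg_left h2 (Real.exp_pos _).le
      _ = 1 := by rw [← Real.exp_add]; simp
  -- the exponential supermartingale
  set G : ℕ → Ω → ℝ := fun n ω =>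
    Real.exp (∑ k ∈ Finset.Icc 1 n, (lam * Y k ω - lam ^ 2 * W k ω)) with hGdef
  have hG_pos : ∀ n ω, 0 < G n ω := fun n ω => Real.exp_pos _
  have hG_meas : ∀ n ≤ K, StronglyMeasurable[ℱ n] (G n) := by
    intro n hn
    apply Real.continuous_exp.comp_stronglyMeasurable
    apply Finset.stronglyMeasurable_fun_sum
    intro k hk
    rw [Finset.mem_Icc] at hk
    have hkK : k ∈ Finset.Icc 1 K := Finset.mem_Icc.2 ⟨hk.1, hk.2.trans hn⟩
    exact (((hmeas k hkK).mono (ℱ.mono hk.2)).const_mul lam).sub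
      (((hW_meas k).mono (ℱ.mono (le_trans (Nat.sub_le k 1) hk.2))).const_mul (lam ^ 2))
  have hG_le : ∀ n ≤ K, ∀ᵐ ω ∂μ, G n ω ≤ Real.exp n := by
    intro n hn
    have hae : ∀ᵐ ω ∂μ, ∀ k ∈ (Finset.Icc 1 n : Set ℕ), lam * Y k ω - lam ^ 2 * W k ω ≤ 1 := by
      rw [ae_ball_iff (Finset.Icc 1 n).countable_toSet]
      intro k hk
      rw [Finset.mem_coe, Finset.mem_Icc] at hk
      have hkK : k ∈ Finset.Icc 1 K := Finset.mem_Icc.2 ⟨hk.1, hk.2.trans hn⟩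
      filter_upwards [hbdd k hkK, hW_nonneg k] with ω h1 h2
      simp only [Pi.zero_apply] at h2
      nlinarith [mul_nonneg (sq_nonneg lam) h2]
    filter_upwards [hae] with ω h
    have hsum : ∑ k ∈ Finset.Icc 1 n, (lam * Y k ω - lam ^ 2 * W k ω) ≤ (n : ℝ) := by
      calc ∑ k ∈ Finset.Icc 1 n, (lam * Y k ω - lam ^ 2 * W k ω)
          ≤ ∑ k ∈ Finset.Icc 1 n, (1 : ℝ) := by
            refine Finset.sum_le_sum fun k hk => h k (Finset.mem_coe.2 hk)
        _ = (n : ℝ) := by simp [Nat.Icc_eq_range']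
    exact Real.exp_le_exp.2 hsum
  have hG_int : ∀ n ≤ K, Integrable (G n) μ := by
    intro n hn
    refine Integrable.mono' (integrable_const (Real.exp n))
      ((hG_meas n hn).mono (ℱ.le n)).aestronglyMeasurable ?_
    filter_upwards [hG_le n hn] with ω h
    rw [Real.norm_eq_abs, abs_of_pos (hG_pos n ω)]; exact h
  -- the supermartingale property of the integrals
  have hG_int_le : ∀ n ≤ K, ∫ ω, G n ω ∂μ ≤ 1 := by
    intro n
    induction n with
    | zero => intro _; simp [hGdef]
    | succ m ih =>
      intro hn
      have hmK : m ≤ K := le_trans (Nat.le_succ m) hn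
      have hm1K : m + 1 ∈ Finset.Icc 1 K := Finset.mem_Icc.2 ⟨Nat.succ_le_succ (Nat.zero_le m), hn⟩
      have hsplit : G (m + 1) = G m * X (m + 1) := by
        funext ω
        simp only [hGdef, hXdef, Pi.mul_apply, ← Real.exp_add]
        congr 1
        rw [Finset.sum_Icc_succ_top (Nat.succ_le_succ (Nat.zero_le m))]
      have hGm1_int : Integrable (G (m + 1)) μ := hG_int (m + 1) hn
      have hGm_int : Integrable (G m) μ := hG_int m hmK
      have hpull : μ[G (m + 1) | ℱ m] =ᵐ[μ] G m * μ[X (m + 1) | ℱ m] := by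
        rw [hsplit]
        exact condExp_mul_of_stronglyMeasurable_left (hG_meas m hmK) (hsplit ▸ hGm1_int)
          (hX_int (m + 1) hm1K)
      have hXc : μ[X (m + 1) | ℱ m] ≤ᵐ[μ] fun _ => 1 := by
        have := hXcond (m + 1) hm1K
        simpa using this
      have hle : μ[G (m + 1) | ℱ m] ≤ᵐ[μ] G m := by
        filter_upwards [hpull, hXc] with ω h1 h2
        rw [h1]
        simp only [Pi.mul_apply]
        calc G m ω * (μ[X (m + 1) | ℱ m]) ω ≤ G m ω * 1 :=
          mul_le_mul_of_nonneg_left h2 (hG_pos m ω).le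
        _ = G m ω := mul_one _
      calc ∫ ω, G (m + 1) ω ∂μ = ∫ ω, (μ[G (m + 1) | ℱ m]) ω ∂μ :=
            (integral_condExp (ℱ.le m)).symm
        _ ≤ ∫ ω, G m ω ∂μ := integral_mono_ae integrable_condExp hGm_int hle
        _ ≤ 1 := ih hmK
  -- Markov's inequality and conclusion
  set S : Set Ω := {ω | ∑ k ∈ Finset.Icc 1 K, Y k ω ≤
      lam * ∑ k ∈ Finset.Icc 1 K, W k ω + Real.log (1 / δ) / lam} with hSdef
  show ENNReal.ofReal (1 - δ) ≤ μ S
  have hS_meas : MeasurableSet S := by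
    apply measurableSet_le
    · exact Finset.measurable_sum _ fun k hk => ((hmeas k hk).mono (ℱ.le k)).measurable
    · apply Measurable.add_const
      apply Measurable.const_mul
      exact Finset.measurable_sum _ fun k hk =>
        ((hW_meas k).mono (ℱ.le (k - 1))).measurable
  have hsubset : Sᶜ ⊆ {ω | (1 / δ : ℝ) ≤ G K ω} := by
    intro ω hω
    simp only [hSdef, Set.mem_compl_iff, Set.mem_setOf_eq, not_le] at hω
    have hlog : Real.log (1 / δ) <
        lam * ∑ k ∈ Finset.Icc 1 K, Y k ω - lam ^ 2 * ∑ k ∈ Finset.Icc 1 K, W k ω := by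
      have := mul_lt_mul_of_pos_left hω hlam0
      rw [mul_add, mul_div_cancel₀ _ hlam0.ne'] at this
      nlinarith
    have hexp : (1 / δ : ℝ) = Real.exp (Real.log (1 / δ)) :=
      (Real.exp_log (by positivity)).symm
    simp only [Set.mem_setOf_eq, hGdef]
    rw [hexp]
    apply (Real.exp_le_exp.2 hlog.le).trans
    apply le_of_eq
    congr 1
    rw [Finset.sum_sub_distrib, Finset.mul_sum, Finset.mul_sum]
  have hmarkov : (μ Sᶜ).toReal ≤ δ := by
    have h1 : (1 / δ) * (μ {ω | (1 / δ : ℝ) ≤ G K ω}).toReal ≤ ∫ ω, G K ω ∂μ :=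
      mul_meas_ge_le_integral_of_nonneg (ae_of_all _ fun ω => (hG_pos K ω).le)
        (hG_int K le_rfl) (1 / δ)
    have h2 : (μ Sᶜ).toReal ≤ (μ {ω | (1 / δ : ℝ) ≤ G K ω}).toReal :=
      ENNReal.toReal_mono (measure_ne_top μ _) (measure_mono hsubset)
    have h3 := (hG_int_le K le_rfl)
    have h4 : (1 / δ) * (μ Sᶜ).toReal ≤ 1 := by
      calc (1 / δ) * (μ Sᶜ).toReal ≤ (1 / δ) * (μ {ω | (1 / δ : ℝ) ≤ G K ω}).toReal :=
        mul_le_mul_of_nonneg_left h2 (by positivity)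
      _ ≤ 1 := h1.trans h3
    rw [div_mul_eq_mul_div, one_mul, div_le_one hδ0] at h4
    linarith
  have hcompl : μ Sᶜ ≤ ENNReal.ofReal δ := by
    rw [← ENNReal.ofReal_toReal (measure_ne_top μ Sᶜ)]
    exact ENNReal.ofReal_le_ofReal hmarkov
  have htotal : μ S + μ Sᶜ = 1 := by
    rw [measure_add_measure_compl hS_meas, measure_univ]
  have : ENNReal.ofReal (1 - δ) = 1 - ENNReal.ofReal δ := by
    rw [ENNReal.ofReal_sub _ hδ0.le, ENNReal.ofReal_one]
  rw [this]
  rw [tsub_le_iff_right]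
  calc (1 : ENNReal) = μ S + μ Sᶜ := htotal.symm
    _ ≤ μ S + ENNReal.ofReal δ := add_le_add_right hcompl _
end

section
/- Let c ∈ [0,1] and let N, Ñ, C, C̃, E, L be real numbers with N ≥ 0, Ñ ≥ 0, E ≥ 0, L ≥ 0. Assume N ≤ Ñ + E, Ñ ≤ N + E, |C̃ − C| ≤ E, and |C/(N ∨ 1) − c| ≤ L/√(N ∨ 1). Then |C̃/((Ñ + E) ∨ 1) − c| ≤ L/√((Ñ + E) ∨ 1) + 3E/((Ñ + E) ∨ 1). -/
/-- Concentration of the private mean cost estimate (cost part of Lemma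
`lem:conc_po`): if the private counts `Ñ, C̃` are within `E` of the true counts
`N, C`, and the non-private empirical mean `C/(N ∨ 1)` is within `L/√(N ∨ 1)`
of the true mean `c ∈ [0,1]`, then the private estimate `C̃/((Ñ + E) ∨ 1)` is
within `L/√((Ñ + E) ∨ 1) + 3E/((Ñ + E) ∨ 1)` of `c`. -/
theorem private_cost_estimate_concentration
    (c N Ntil C Ctil E L : ℝ)
    (hc : c ∈ Set.Icc (0 : ℝ) 1)
    (hN : 0 ≤ N) (hNtil : 0 ≤ Ntil) (hE : 0 ≤ E) (hL : 0 ≤ L)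
    (h1 : N ≤ Ntil + E) (h2 : Ntil ≤ N + E)
    (h3 : |Ctil - C| ≤ E)
    (h4 : |C / max N 1 - c| ≤ L / Real.sqrt (max N 1)) :
    |Ctil / max (Ntil + E) 1 - c| ≤
      L / Real.sqrt (max (Ntil + E) 1) + 3 * E / max (Ntil + E) 1 := by
  obtain ⟨hc0, hc1⟩ := hc
  set m := max N 1 with hm
  set m' := max (Ntil + E) 1 with hm'
  have hm1 : (1:ℝ) ≤ m := le_max_right _ _
  have hm'1 : (1:ℝ) ≤ m' := le_max_right _ _
  have hmpos : (0:ℝ) < m := lt_of_lt_of_le one_pos hm1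
  have hm'pos : (0:ℝ) < m' := lt_of_lt_of_le one_pos hm'1
  have hmm' : m ≤ m' := max_le_max h1 le_rfl
  have hdiff : m' - m ≤ 2 * E := by
    have h5 : m' ≤ max (N + 2*E) 1 := max_le_max (by linarith) le_rfl
    have h6 : max (N + 2*E) 1 ≤ m + 2*E := by
      apply max_le
      · have := le_max_left N (1:ℝ); linarith
      · have := le_max_right N (1:ℝ); linarith
    linarith
  have hsm : (0:ℝ) < Real.sqrt m := Real.sqrt_pos.mpr hmpos
  have hsm' : (0:ℝ) < Real.sqrt m' := Real.sqrt_pos.mpr hm'pos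
  have key : Ctil / m' - c
      = (Ctil - C)/m' + (m/m')*(C/m - c) + c*(m - m')/m' := by
    field_simp
    ring
  have t1 : |(Ctil - C)/m'| ≤ E / m' := by
    rw [abs_div, abs_of_pos hm'pos]
    exact div_le_div_of_nonneg_right h3 hm'pos.le
  have t2 : |(m/m')*(C/m - c)| ≤ L / Real.sqrt m' := by
    rw [abs_mul, abs_of_pos (div_pos hmpos hm'pos)]
    have step1 : (m/m') * |C/m - c| ≤ (m/m') * (L / Real.sqrt m) :=
      mul_le_mul_of_nonneg_left h4 (div_pos hmpos hm'pos).le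
    have hs : Real.sqrt m * Real.sqrt m = m := Real.mul_self_sqrt hmpos.le
    have heq : (m/m') * (L / Real.sqrt m) = L * Real.sqrt m / m' := by
      rw [div_mul_div_comm]
      field_simp
      linear_combination (-L) * hs
    have step2 : L * Real.sqrt m / m' ≤ L * Real.sqrt m' / m' := by
      apply div_le_div_of_nonneg_right _ hm'pos.le
      exact mul_le_mul_of_nonneg_left (Real.sqrt_le_sqrt hmm') hL
    have heq2 : L * Real.sqrt m' / m' = L / Real.sqrt m' := by
      rw [mul_div_assoc, Real.sqrt_div_self', mul_one_div]
    linarith [heq ▸ step1, heq2 ▸ step2]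
  have t3 : |c*(m - m')/m'| ≤ 2 * E / m' := by
    rw [abs_div, abs_of_pos hm'pos, abs_mul]
    apply div_le_div_of_nonneg_right _ hm'pos.le
    rw [abs_of_nonneg hc0, abs_sub_comm, abs_of_nonneg (by linarith : (0:ℝ) ≤ m' - m)]
    calc c * (m' - m) ≤ 1 * (m' - m) := by
          apply mul_le_mul_of_nonneg_right hc1; linarith
      _ ≤ 2 * E := by linarith
  calc |Ctil / m' - c|
      ≤ |(Ctil - C)/m'| + |(m/m')*(C/m - c)| + |c*(m - m')/m'| := by
        rw [key]; exact (abs_add_le _ _).trans (by linarith [abs_add_le ((Ctil - C)/m') ((m/m')*(C/m - c))])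
    _ ≤ E/m' + L / Real.sqrt m' + 2*E/m' := by linarith
    _ = L / Real.sqrt m' + 3 * E / m' := by ring
end

section
/- Let S be a finite nonempty set, let P : S → [0,1] satisfy ∑_{s ∈ S} P(s) = 1, and let n, ñ : S → ℝ with n(s) ≥ 0 for all s. Let N, Ñ, E₁, E₂, L be real numbers with N ≥ 0, Ñ ≥ 0, E₁ ≥ 0, E₂ ≥ 0, L ≥ 0. Assume N ≤ Ñ + E₁, Ñ ≤ N + E₁, |ñ(s) − n(s)| ≤ E₂ for all s ∈ S, and ∑_{s ∈ S} |n(s)/(N ∨ 1) − P(s)| ≤ L/√(N ∨ 1). Then ∑_{s ∈ S} |ñ(s)/((Ñ + E₁) ∨ 1) − P(s)| ≤ L/√((Ñ + E₁) ∨ 1) + (|S|·E₂ + 2E₁)/((Ñ + E₁) ∨ 1). -/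
/-!
Write `M = N ∨ 1` and `M' = (Ñ + E₁) ∨ 1`, so that `M ≤ M' ≤ M + 2E₁`. Rescaling from `M` to `M'`
splits the error of `ñ/M'` into the count error `(ñ - n)/M'`, the old error `n/M - P` damped by
`M/M'`, and a bias `P (M' - M)/M'`. Summing over `S`, these contribute `|S|E₂/M'`,
`(M/M') L/√M = L √M/M' ≤ L/√M'` and at most `2E₁/M'`.
-/

open Finset

lemma abs_div_sub_le_of_rescale {x y p a b : ℝ} (ha : 0 < a) (hab : a ≤ b) (hp : 0 ≤ p) :
    |y / b - p| ≤ |y - x| / b + a / b * |x / a - p| + (b - a) / b * p := by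
  have hb : 0 < b := ha.trans_le hab
  have hsplit : y / b - p = (y - x) / b + a / b * (x / a - p) + -((b - a) / b * p) := by
    field_simp
    ring
  calc |y / b - p| ≤ |(y - x) / b| + |a / b * (x / a - p)| + |-((b - a) / b * p)| :=
        hsplit ▸ abs_add_three _ _ _
    _ = |y - x| / b + a / b * |x / a - p| + (b - a) / b * p := by
        rw [abs_neg, abs_div, abs_mul, abs_of_pos hb, abs_of_pos (div_pos ha hb),
          abs_of_nonneg (mul_nonneg (div_nonneg (sub_nonneg.2 hab) hb.le) hp)]

lemma sum_abs_div_sub_le_of_rescale {ι : Type*} (s : Finset ι) (x y p : ι → ℝ) {a b : ℝ}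
    (ha : 0 < a) (hab : a ≤ b) (hp : ∀ i ∈ s, 0 ≤ p i) :
    ∑ i ∈ s, |y i / b - p i| ≤
      (∑ i ∈ s, |y i - x i|) / b + a / b * ∑ i ∈ s, |x i / a - p i|
        + (b - a) / b * ∑ i ∈ s, p i := by
  rw [sum_div, mul_sum, mul_sum, ← sum_add_distrib, ← sum_add_distrib]
  exact sum_le_sum fun i hi => abs_div_sub_le_of_rescale ha hab (hp i hi)

lemma mul_div_sqrt_le_div_sqrt {L a b : ℝ} (hL : 0 ≤ L) (ha : 0 < a) (hab : a ≤ b) :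
    a / b * (L / √a) ≤ L / √b := by
  have hb : 0 < b := ha.trans_le hab
  calc a / b * (L / √a) = L * (a / √a) / b := by ring
    _ = L * √a / b := by rw [Real.div_sqrt]
    _ ≤ L * √b / b := by gcongr
    _ = L / √b := by rw [mul_div_assoc, Real.sqrt_div_self', mul_one_div]

theorem private_transition_estimate_concentration_general
    {S : Type*} [Fintype S]
    (P : S → ℝ) (hP0 : ∀ s, 0 ≤ P s)
    (hPsum : ∑ s, P s = 1)
    (n ntil : S → ℝ)
    (N Ntil E1 E2 L : ℝ)
    (hL : 0 ≤ L)
    (h1 : N ≤ Ntil + E1) (h2 : Ntil ≤ N + E1)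
    (h3 : ∀ s, |ntil s - n s| ≤ E2)
    (h4 : ∑ s, |n s / max N 1 - P s| ≤ L / Real.sqrt (max N 1)) :
    ∑ s, |ntil s / max (Ntil + E1) 1 - P s| ≤
      L / Real.sqrt (max (Ntil + E1) 1)
        + ((Fintype.card S : ℝ) * E2 + 2 * E1) / max (Ntil + E1) 1 := by
  set M := max N 1
  set M' := max (Ntil + E1) 1
  have hM : 0 < M := zero_lt_one.trans_le (le_max_right _ _)
  have hM' : 0 < M' := zero_lt_one.trans_le (le_max_right _ _)
  have hMM' : M ≤ M' := max_le_max_right 1 h1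
  have hM'M : M' - M ≤ 2 * E1 := by
    have hE1 : 0 ≤ E1 := by linarith
    have : M' ≤ M + 2 * E1 := by
      rw [← max_add_add_right]
      exact max_le_max (by linarith) (by linarith)
    linarith
  have hcount : ∑ s, |ntil s - n s| ≤ Fintype.card S * E2 := by
    simpa using sum_le_card_nsmul univ _ E2 fun s _ => h3 s
  calc ∑ s, |ntil s / M' - P s|
      ≤ (∑ s, |ntil s - n s|) / M' + M / M' * ∑ s, |n s / M - P s|
          + (M' - M) / M' * ∑ s, P s :=
        sum_abs_div_sub_le_of_rescale univ n ntil P hM hMM' fun s _ => hP0 s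
    _ ≤ Fintype.card S * E2 / M' + M / M' * (L / √M) + 2 * E1 / M' := by
        rw [hPsum, mul_one]
        gcongr
    _ ≤ Fintype.card S * E2 / M' + L / √M' + 2 * E1 / M' := by
        gcongr
        exact mul_div_sqrt_le_div_sqrt hL hM hMM'
    _ = L / √M' + (Fintype.card S * E2 + 2 * E1) / M' := by ring

/-- Concentration of the private empirical transition distribution (transition
part of Lemma `lem:conc_po`): if the private visit count `Ñ` is within `E₁` of
`N`, the private transition counts `ñ s` are within `E₂` of `n s`, and the
non-private empirical distribution `s ↦ n s/(N ∨ 1)` is within ℓ₁-distance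
`L/√(N ∨ 1)` of the true distribution `P`, then the private empirical
distribution `s ↦ ñ s/((Ñ + E₁) ∨ 1)` is within ℓ₁-distance
`L/√((Ñ + E₁) ∨ 1) + (|S| E₂ + 2E₁)/((Ñ + E₁) ∨ 1)` of `P`. -/
theorem private_transition_estimate_concentration
    {S : Type*} [Fintype S] [Nonempty S]
    (P : S → ℝ) (hP0 : ∀ s, 0 ≤ P s) (hP1 : ∀ s, P s ≤ 1)
    (hPsum : ∑ s, P s = 1)
    (n ntil : S → ℝ) (hn : ∀ s, 0 ≤ n s)
    (N Ntil E1 E2 L : ℝ)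
    (hN : 0 ≤ N) (hNtil : 0 ≤ Ntil) (hE1 : 0 ≤ E1) (hE2 : 0 ≤ E2) (hL : 0 ≤ L)
    (h1 : N ≤ Ntil + E1) (h2 : Ntil ≤ N + E1)
    (h3 : ∀ s, |ntil s - n s| ≤ E2)
    (h4 : ∑ s, |n s / max N 1 - P s| ≤ L / Real.sqrt (max N 1)) :
    ∑ s, |ntil s / max (Ntil + E1) 1 - P s| ≤
      L / Real.sqrt (max (Ntil + E1) 1)
        + ((Fintype.card S : ℝ) * E2 + 2 * E1) / max (Ntil + E1) 1 :=
  private_transition_estimate_concentration_general P hP0 hPsum n ntil N Ntil E1 E2 L hL h1 h2 h3 h4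
end

section
/- Let S be a finite nonempty set, let H > 0, let P : S → [0,1] satisfy ∑_{s ∈ S} P(s) = 1, let V : S → [0, H], and let n, ñ : S → ℝ with n(s) ≥ 0 for all s. Let N, Ñ, E₁, E₂, L be real numbers with N ≥ 0, Ñ ≥ 0, E₁ ≥ 0, E₂ ≥ 0, L ≥ 0. Assume N ≤ Ñ + E₁, Ñ ≤ N + E₁, |ñ(s) − n(s)| ≤ E₂ for all s ∈ S, and |∑_{s ∈ S} V(s)·(n(s)/(N ∨ 1) − P(s))| ≤ H·L/√(N ∨ 1). Then |∑_{s ∈ S} V(s)·(ñ(s)/((Ñ + E₁) ∨ 1) − P(s))| ≤ H·L/√((Ñ + E₁) ∨ 1) + H·(|S|·E₂ + 2E₁)/((Ñ + E₁) ∨ 1). -/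
/-- Concentration of the private value estimate (second part of Lemma
`lem:conc_vi`): for a fixed value function `V : S → [0,H]`, if the private
counts are within `E₁`, `E₂` of the true ones and the non-private value
estimate `∑_s V s · n s/(N ∨ 1)` is within `H·L/√(N ∨ 1)` of `∑_s V s · P s`,
then the private value estimate is within
`H·L/√((Ñ + E₁) ∨ 1) + H(|S| E₂ + 2E₁)/((Ñ + E₁) ∨ 1)`. -/
theorem private_value_estimate_concentration
    {S : Type*} [Fintype S] [Nonempty S]
    (H : ℝ) (hH : 0 < H)
    (P : S → ℝ) (hP0 : ∀ s, 0 ≤ P s) (hP1 : ∀ s, P s ≤ 1)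
    (hPsum : ∑ s, P s = 1)
    (V : S → ℝ) (hV : ∀ s, V s ∈ Set.Icc (0 : ℝ) H)
    (n ntil : S → ℝ) (hn : ∀ s, 0 ≤ n s)
    (N Ntil E1 E2 L : ℝ)
    (hN : 0 ≤ N) (hNtil : 0 ≤ Ntil) (hE1 : 0 ≤ E1) (hE2 : 0 ≤ E2) (hL : 0 ≤ L)
    (h1 : N ≤ Ntil + E1) (h2 : Ntil ≤ N + E1)
    (h3 : ∀ s, |ntil s - n s| ≤ E2)
    (h4 : |∑ s, V s * (n s / max N 1 - P s)| ≤ H * L / Real.sqrt (max N 1)) :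
    |∑ s, V s * (ntil s / max (Ntil + E1) 1 - P s)| ≤
      H * L / Real.sqrt (max (Ntil + E1) 1)
        + H * ((Fintype.card S : ℝ) * E2 + 2 * E1) / max (Ntil + E1) 1 := by
  set M := max N 1 with hMdef
  set M' := max (Ntil + E1) 1 with hM'def
  have hM1 : (1 : ℝ) ≤ M := le_max_right _ _
  have hM'1 : (1 : ℝ) ≤ M' := le_max_right _ _
  have hMpos : (0 : ℝ) < M := lt_of_lt_of_le one_pos hM1
  have hM'pos : (0 : ℝ) < M' := lt_of_lt_of_le one_pos hM'1
  have hMM' : M ≤ M' := max_le_max h1 le_rfl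
  have hM'M : M' ≤ M + 2 * E1 := by
    have h : Ntil + E1 ≤ N + 2 * E1 := by linarith
    have : M' ≤ max (N + 2 * E1) 1 := max_le_max h le_rfl
    refine this.trans (max_le ?_ ?_)
    · have : N ≤ M := le_max_left _ _
      linarith
    · linarith
  have hsqM : (0 : ℝ) < Real.sqrt M := Real.sqrt_pos.mpr hMpos
  have hsqM' : (0 : ℝ) < Real.sqrt M' := Real.sqrt_pos.mpr hM'pos
  have hsqle : Real.sqrt M ≤ Real.sqrt M' := Real.sqrt_le_sqrt hMM'
  -- decomposition
  have key : ∑ s, V s * (ntil s / M' - P s)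
      = (∑ s, V s * ((ntil s - n s) / M'))
        + (M / M') * (∑ s, V s * (n s / M - P s))
        + (M / M' - 1) * (∑ s, V s * P s) := by
    rw [Finset.mul_sum, Finset.mul_sum, ← Finset.sum_add_distrib,
      ← Finset.sum_add_distrib]
    refine Finset.sum_congr rfl fun s _ => ?_
    field_simp
    ring
  -- term A
  have hA : |∑ s, V s * ((ntil s - n s) / M')|
      ≤ (Fintype.card S : ℝ) * (H * E2) / M' := by
    calc |∑ s, V s * ((ntil s - n s) / M')|
        ≤ ∑ s, |V s * ((ntil s - n s) / M')| := Finset.abs_sum_le_sum_abs _ _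
      _ ≤ ∑ _s : S, H * E2 / M' := by
          refine Finset.sum_le_sum fun s _ => ?_
          rw [abs_mul, abs_div, abs_of_pos hM'pos, abs_of_nonneg (hV s).1,
            ← mul_div_assoc]
          exact div_le_div_of_nonneg_right
            (mul_le_mul (hV s).2 (h3 s) (abs_nonneg _) hH.le) hM'pos.le
      _ = (Fintype.card S : ℝ) * (H * E2 / M') := by
          rw [Finset.sum_const, Finset.card_univ, nsmul_eq_mul]
      _ = (Fintype.card S : ℝ) * (H * E2) / M' := by ring
  -- term B
  have hB : |(M / M') * (∑ s, V s * (n s / M - P s))| ≤ H * L / Real.sqrt M' := by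
    rw [abs_mul, abs_of_pos (div_pos hMpos hM'pos)]
    have step1 : (M / M') * |∑ s, V s * (n s / M - P s)|
        ≤ (M / M') * (H * L / Real.sqrt M) :=
      mul_le_mul_of_nonneg_left h4 (div_pos hMpos hM'pos).le
    refine step1.trans ?_
    have heq : (M / M') * (H * L / Real.sqrt M) = H * L * Real.sqrt M / M' := by
      have h0 : (M / M') * (H * L / Real.sqrt M) = H * L * (M / Real.sqrt M) / M' := by
        ring
      rw [h0, Real.div_sqrt]
    rw [heq, div_le_div_iff₀ hM'pos hsqM']
    have hMM'2 : Real.sqrt M * Real.sqrt M' ≤ M' := by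
      nlinarith [Real.sq_sqrt hM'pos.le]
    nlinarith [mul_nonneg hH.le hL]
  -- term C
  have hC : |(M / M' - 1) * (∑ s, V s * P s)| ≤ H * (2 * E1) / M' := by
    have hVP0 : (0 : ℝ) ≤ ∑ s, V s * P s :=
      Finset.sum_nonneg fun s _ => mul_nonneg (hV s).1 (hP0 s)
    have hVPH : ∑ s, V s * P s ≤ H := by
      calc ∑ s, V s * P s ≤ ∑ s, H * P s :=
            Finset.sum_le_sum fun s _ =>
              mul_le_mul_of_nonneg_right (hV s).2 (hP0 s)
        _ = H := by rw [← Finset.mul_sum, hPsum, mul_one]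
    rw [abs_mul, abs_of_nonneg hVP0]
    have habs : |M / M' - 1| ≤ 2 * E1 / M' := by
      rw [abs_of_nonpos (by
        rw [sub_nonpos, div_le_one hM'pos]; exact hMM')]
      rw [neg_sub, le_div_iff₀ hM'pos]
      have : (1 - M / M') * M' = M' - M := by field_simp
      rw [this]
      linarith
    calc |M / M' - 1| * (∑ s, V s * P s) ≤ (2 * E1 / M') * H :=
          mul_le_mul habs hVPH hVP0 (by positivity)
      _ = H * (2 * E1) / M' := by ring
  -- combine
  rw [key]
  calc |∑ s, V s * ((ntil s - n s) / M')
        + (M / M') * (∑ s, V s * (n s / M - P s))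
        + (M / M' - 1) * (∑ s, V s * P s)|
      ≤ |∑ s, V s * ((ntil s - n s) / M')
          + (M / M') * (∑ s, V s * (n s / M - P s))|
        + |(M / M' - 1) * (∑ s, V s * P s)| := abs_add_le _ _
    _ ≤ (|∑ s, V s * ((ntil s - n s) / M')|
          + |(M / M') * (∑ s, V s * (n s / M - P s))|)
        + |(M / M' - 1) * (∑ s, V s * P s)| := by
          gcongr
          exact abs_add_le _ _
    _ ≤ ((Fintype.card S : ℝ) * (H * E2) / M' + H * L / Real.sqrt M')
        + H * (2 * E1) / M' := add_le_add (add_le_add hA hB) hC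
    _ = H * L / Real.sqrt M'
        + H * ((Fintype.card S : ℝ) * E2 + 2 * E1) / M' := by ring
end

section
/- Let p ∈ [0,1] and let n, ñ, N, Ñ, E₁, E₂, C, L′ be real numbers with n ≥ 0, N ≥ 0, Ñ ≥ 0, E₁ ≥ 0, E₂ ≥ 0, C ≥ 0, L′ ≥ 0. Assume N ≤ Ñ + E₁, Ñ ≤ N + E₁, |ñ − n| ≤ E₂, and |n/(N ∨ 1) − p| ≤ C·√(L′·p/(N ∨ 1)) + C·L′/(N ∨ 1). Then |ñ/((Ñ + E₁) ∨ 1) − p| ≤ C·√(L′·p/((Ñ + E₁) ∨ 1)) + (C·L′ + 2E₁ + E₂)/((Ñ + E₁) ∨ 1). -/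
/-!
Both estimates `ñ / b` and `n / a` use denominators `a = N ∨ 1 ≤ b = (Ñ + E₁) ∨ 1 ≤ a + 2E₁`.
Rescaling the deviation of `n / a` by the factor `a / b ≤ 1` only shrinks the Bernstein radius,
since `√(v / a) · (a / b) = √(v / b) · √(a / b)`; moving the numerator from `n` to `ñ` and the
denominator from `a` to `b` costs at most `E₂ / b` and `p (b - a) / b ≤ 2E₁ / b`.
-/

open Real

lemma sqrt_div_mul_div_le (v : ℝ) {a b : ℝ} (ha : 0 < a) (hab : a ≤ b) :
    √(v / a) * (a / b) ≤ √(v / b) := by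
  have hb : 0 < b := ha.trans_le hab
  have hab' : a / b ≤ 1 := (div_le_one hb).2 hab
  calc √(v / a) * (a / b) = √(v / a * (a / b) ^ 2) := by
        rw [sqrt_mul' _ (sq_nonneg _), sqrt_sq (by positivity)]
    _ = √(v / b) * √(a / b) := by
        rw [← sqrt_mul' _ (by positivity)]
        congr 1
        field_simp
    _ ≤ √(v / b) := by
        apply mul_le_of_le_one_right (sqrt_nonneg _)
        exact sqrt_le_one.2 hab'

lemma bernstein_radius_rescale {C a b : ℝ} (v c : ℝ) (hC : 0 ≤ C) (ha : 0 < a) (hab : a ≤ b) :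
    (C * √(v / a) + c / a) * (a / b) ≤ C * √(v / b) + c / b := by
  have hb : 0 < b := ha.trans_le hab
  have hc : c / a * (a / b) = c / b := by field_simp
  rw [add_mul, hc, mul_assoc]
  gcongr
  exact sqrt_div_mul_div_le v ha hab

lemma abs_div_sub_le_rescaled {p x y a b : ℝ} (hp : p ∈ Set.Icc (0 : ℝ) 1)
    (ha : 0 < a) (hab : a ≤ b) :
    |y / b - p| ≤ |x / a - p| * (a / b) + (|y - x| + (b - a)) / b := by
  have hb : 0 < b := ha.trans_le hab
  have hsplit : y / b - p = (y - x) / b + (x / a - p) * (a / b) - p * (b - a) / b := by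
    field_simp
    ring
  have hshift : |p * (b - a) / b| ≤ (b - a) / b := by
    rw [abs_of_nonneg (by have := hp.1; have := sub_nonneg.2 hab; positivity)]
    gcongr
    nlinarith [hp.2, sub_nonneg.2 hab]
  calc |y / b - p|
      ≤ |(y - x) / b| + |(x / a - p) * (a / b)| + |p * (b - a) / b| := by
        rw [hsplit]
        exact (abs_sub _ _).trans (by gcongr; exact abs_add_le _ _)
    _ ≤ |y - x| / b + |x / a - p| * (a / b) + (b - a) / b := by
        rw [abs_div, abs_mul, abs_of_pos hb, abs_of_pos (div_pos ha hb)]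
        gcongr
    _ = |x / a - p| * (a / b) + (|y - x| + (b - a)) / b := by ring

theorem private_single_transition_bernstein_general
    (p n ntil N Ntil E1 E2 C L' : ℝ)
    (hp : p ∈ Set.Icc (0 : ℝ) 1)
    (hE1 : 0 ≤ E1) (hC : 0 ≤ C)
    (h1 : N ≤ Ntil + E1) (h2 : Ntil ≤ N + E1)
    (h3 : |ntil - n| ≤ E2)
    (h4 : |n / max N 1 - p| ≤
      C * Real.sqrt (L' * p / max N 1) + C * L' / max N 1) :
    |ntil / max (Ntil + E1) 1 - p| ≤
      C * Real.sqrt (L' * p / max (Ntil + E1) 1)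
        + (C * L' + 2 * E1 + E2) / max (Ntil + E1) 1 := by
  set a := max N 1
  set b := max (Ntil + E1) 1
  have ha : 0 < a := lt_max_of_lt_right one_pos
  have hab : a ≤ b := max_le_max_right 1 h1
  have hba : b - a ≤ 2 * E1 := by
    have : b ≤ a + 2 * E1 := max_le (by linarith [le_max_left N 1]) (by linarith [le_max_right N 1])
    linarith
  calc |ntil / b - p| ≤ |n / a - p| * (a / b) + (|ntil - n| + (b - a)) / b :=
        abs_div_sub_le_rescaled hp ha hab
    _ ≤ (C * √(L' * p / a) + C * L' / a) * (a / b) + (E2 + 2 * E1) / b := by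
        gcongr
    _ ≤ C * √(L' * p / b) + C * L' / b + (E2 + 2 * E1) / b := by
        gcongr
        exact bernstein_radius_rescale _ _ hC ha hab
    _ = C * √(L' * p / b) + (C * L' + 2 * E1 + E2) / b := by ring

/-- Bernstein-type concentration of a single private transition probability
estimate (third part of Lemma `lem:conc_vi`): if the private counts `Ñ, ñ` are
within `E₁, E₂` of the true counts `N, n`, and the non-private empirical
probability `n/(N ∨ 1)` satisfies a variance-aware bound
`|n/(N ∨ 1) − p| ≤ C√(L′ p/(N ∨ 1)) + C L′/(N ∨ 1)`, then
`|ñ/((Ñ + E₁) ∨ 1) − p| ≤ C√(L′ p/((Ñ + E₁) ∨ 1))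
   + (C L′ + 2E₁ + E₂)/((Ñ + E₁) ∨ 1)`. -/
theorem private_single_transition_bernstein
    (p n ntil N Ntil E1 E2 C L' : ℝ)
    (hp : p ∈ Set.Icc (0 : ℝ) 1)
    (hn : 0 ≤ n) (hN : 0 ≤ N) (hNtil : 0 ≤ Ntil)
    (hE1 : 0 ≤ E1) (hE2 : 0 ≤ E2) (hC : 0 ≤ C) (hL' : 0 ≤ L')
    (h1 : N ≤ Ntil + E1) (h2 : Ntil ≤ N + E1)
    (h3 : |ntil - n| ≤ E2)
    (h4 : |n / max N 1 - p| ≤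
      C * Real.sqrt (L' * p / max N 1) + C * L' / max N 1) :
    |ntil / max (Ntil + E1) 1 - p| ≤
      C * Real.sqrt (L' * p / max (Ntil + E1) 1)
        + (C * L' + 2 * E1 + E2) / max (Ntil + E1) 1 :=
  private_single_transition_bernstein_general p n ntil N Ntil E1 E2 C L' hp hE1 hC h1 h2 h3 h4
end

section
/- Let b > 0, let m ≥ 1 be an integer, and let Y_1, …, Y_m be independent real random variables each distributed as Lap(b). Then for every δ ∈ (0,1) with ln(2/δ) ≤ m, with probability at least 1 − δ, |∑_{i=1}^m Y_i| ≤ b·√(8·m·ln(2/δ)). -/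
open MeasureTheory ProbabilityTheory Set
open scoped ENNReal NNReal

/-- The Laplace distribution on `ℝ` with location `a` and scale `b`:
the measure with density `x ↦ (1/(2b)) exp(−|x−a|/b)` w.r.t. Lebesgue measure. -/
noncomputable def laplaceMeasure (a b : ℝ) : Measure ℝ :=
  volume.withDensity fun x => ENNReal.ofReal ((1 / (2 * b)) * Real.exp (-|x - a| / b))

lemma exp_neg_mul_integral_Ioi {c : ℝ} (hc : 0 < c) :
    ∫ x in Ioi (0:ℝ), Real.exp (-c * x) = 1 / c := by
  have h := integral_comp_mul_left_Ioi (fun x => Real.exp (-x)) 0 hc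
  simp only [mul_zero, smul_eq_mul, integral_exp_neg_Ioi_zero, neg_mul] at h ⊢
  simpa [one_div] using h

lemma lap_eqOn_Ioi {b s : ℝ} (hb : 0 < b) :
    ∀ x ∈ Ioi (0:ℝ),
      Real.exp (s*x) * ((1/(2*b)) * Real.exp (-|x|/b))
        = (1/(2*b)) * Real.exp (-(1/b - s) * x) := by
  intro x hx
  have hax : |x| = x := abs_of_pos hx
  rw [hax, mul_comm (Real.exp (s*x)), mul_assoc, ← Real.exp_add]
  congr 1
  field_simp
  ring

lemma lap_intOn_Ioi {b s : ℝ} (hb : 0 < b) (hs : s < 1/b) :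
    IntegrableOn (fun x => Real.exp (s*x) * ((1/(2*b)) * Real.exp (-|x|/b))) (Ioi (0:ℝ)) := by
  have hc : 0 < 1/b - s := sub_pos.mpr hs
  exact IntegrableOn.congr_fun ((exp_neg_integrableOn_Ioi 0 hc).const_mul (1/(2*b)))
    (fun x hx => (lap_eqOn_Ioi hb x hx).symm) measurableSet_Ioi

lemma lap_integral_Ioi {b s : ℝ} (hb : 0 < b) (hs : s < 1/b) :
    ∫ x in Ioi (0:ℝ), Real.exp (s*x) * ((1/(2*b)) * Real.exp (-|x|/b))
      = (1/(2*b)) * (1 / (1/b - s)) := by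
  have hc : 0 < 1/b - s := sub_pos.mpr hs
  rw [setIntegral_congr_fun measurableSet_Ioi (lap_eqOn_Ioi hb), integral_const_mul,
    exp_neg_mul_integral_Ioi hc]

lemma lap_neg_comp {b t : ℝ} :
    (fun x : ℝ => Real.exp (t * (-x)) * ((1/(2*b)) * Real.exp (-|(-x)|/b)))
      = fun x => Real.exp ((-t) * x) * ((1/(2*b)) * Real.exp (-|x|/b)) := by
  funext x
  rw [abs_neg, mul_neg, neg_mul]

lemma lap_intOn_Iic {b t : ℝ} (hb : 0 < b) (ht : |t| < 1/b) :
    IntegrableOn (fun x => Real.exp (t*x) * ((1/(2*b)) * Real.exp (-|x|/b))) (Iic (0:ℝ)) := by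
  have hnt : -t < 1/b := lt_of_le_of_lt (neg_le_abs t) ht
  have hmap : IntegrableOn
      (fun x => Real.exp (t * (-x)) * ((1/(2*b)) * Real.exp (-|(-x)|/b))) (Ici (0:ℝ)) := by
    rw [lap_neg_comp]
    exact (integrableOn_Ici_iff_integrableOn_Ioi (by finiteness)).mpr (lap_intOn_Ioi hb hnt)
  have m : MeasurableEmbedding fun x : ℝ => -x := (Homeomorph.neg ℝ).measurableEmbedding
  have key : IntegrableOn (fun x => Real.exp (t*x) * ((1/(2*b)) * Real.exp (-|x|/b)))
      (Iic (0:ℝ)) (Measure.map (fun x : ℝ => -x) volume) := by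
    rw [m.integrableOn_map_iff]
    simpa [Function.comp_def, neg_preimage, neg_Iic, neg_zero] using hmap
  rwa [Measure.map_neg_eq_self] at key

lemma lap_exp_integrable {b t : ℝ} (hb : 0 < b) (ht : |t| < 1/b) :
    Integrable (fun x => Real.exp (t*x) * ((1/(2*b)) * Real.exp (-|x|/b))) := by
  have h1 := lap_intOn_Ioi hb (lt_of_le_of_lt (le_abs_self t) ht)
  have h2 := lap_intOn_Iic hb ht
  have := h2.union h1
  rwa [Iic_union_Ioi, integrableOn_univ] at this

lemma lap_exp_integral {b t : ℝ} (hb : 0 < b) (ht : |t| < 1/b) :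
    ∫ x, Real.exp (t*x) * ((1/(2*b)) * Real.exp (-|x|/b))
      = 1 / (1 - t^2 * b^2) := by
  have h1 := lap_intOn_Ioi hb (lt_of_le_of_lt (le_abs_self t) ht)
  have h2 := lap_intOn_Iic hb ht
  have hnt : -t < 1/b := lt_of_le_of_lt (neg_le_abs t) ht
  have hsplit : ∫ x, Real.exp (t*x) * ((1/(2*b)) * Real.exp (-|x|/b))
      = (∫ x in Iic (0:ℝ), Real.exp (t*x) * ((1/(2*b)) * Real.exp (-|x|/b)))
        + ∫ x in Ioi (0:ℝ), Real.exp (t*x) * ((1/(2*b)) * Real.exp (-|x|/b)) := by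
    rw [← setIntegral_union (Iic_disjoint_Ioi le_rfl) measurableSet_Ioi h2 h1,
      Iic_union_Ioi, Measure.restrict_univ]
  have hIic : ∫ x in Iic (0:ℝ), Real.exp (t*x) * ((1/(2*b)) * Real.exp (-|x|/b))
      = (1/(2*b)) * (1 / (1/b - -t)) := by
    have h := integral_comp_neg_Ioi 0
      (fun x => Real.exp (t*x) * ((1/(2*b)) * Real.exp (-|x|/b)))
    simp only [neg_zero] at h
    rw [← h, show (fun x : ℝ => Real.exp (t * (-x)) * ((1/(2*b)) * Real.exp (-|(-x)|/b)))
        = fun x => Real.exp ((-t) * x) * ((1/(2*b)) * Real.exp (-|x|/b)) from lap_neg_comp]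
    exact lap_integral_Ioi hb hnt
  rw [hsplit, hIic, lap_integral_Ioi hb (lt_of_le_of_lt (le_abs_self t) ht)]
  have hd1 : 0 < 1/b - t := sub_pos.mpr (lt_of_le_of_lt (le_abs_self t) ht)
  have hd2 : 0 < 1/b - -t := sub_pos.mpr hnt
  have htb : |t * b| < 1 := by
    rw [abs_mul, abs_of_pos hb]
    calc |t| * b < (1/b) * b := by gcongr
      _ = 1 := by field_simp
  obtain ⟨htb1, htb2⟩ := abs_lt.mp htb
  have e1 : 1 + t*b ≠ 0 := by nlinarith
  have e2 : (1:ℝ) - t*b ≠ 0 := by nlinarith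
  have hd3 : 1 - t^2*b^2 ≠ 0 := by nlinarith
  have hb' : b ≠ 0 := hb.ne'
  have r1 : 1/b - -t = (1 + t*b)/b := by field_simp; ring
  have r2 : 1/b - t = (1 - t*b)/b := by field_simp
  rw [r1, r2, one_div_div, one_div_div]
  have e1' : 1 + b*t ≠ 0 := by rwa [mul_comm]
  have e2' : 1 - b*t ≠ 0 := by rwa [mul_comm]
  have hd3' : 1 - b^2*t^2 ≠ 0 := by rwa [mul_comm]
  field_simp
  ring

lemma lap_density_meas (b : ℝ) :
    Measurable fun x : ℝ => ENNReal.ofReal ((1/(2*b)) * Real.exp (-|x - 0|/b)) := by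
  fun_prop

lemma lap_density_simp (b : ℝ) (x : ℝ) :
    ((1/(2*b)) * Real.exp (-|x - 0|/b)) = (1/(2*b)) * Real.exp (-|x|/b) := by
  rw [sub_zero]

lemma laplace_integrable_exp {b t : ℝ} (hb : 0 < b) (ht : |t| < 1/b) :
    Integrable (fun x => Real.exp (t * x)) (laplaceMeasure 0 b) := by
  rw [laplaceMeasure, integrable_withDensity_iff (lap_density_meas b)
    (Filter.Eventually.of_forall fun x => ENNReal.ofReal_lt_top)]
  have h : ∀ x : ℝ,
      Real.exp (t * x) * (ENNReal.ofReal ((1/(2*b)) * Real.exp (-|x - 0|/b))).toReal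
        = Real.exp (t*x) * ((1/(2*b)) * Real.exp (-|x|/b)) := by
    intro x
    rw [ENNReal.toReal_ofReal (by positivity), lap_density_simp]
  simp only [h]
  exact lap_exp_integrable hb ht

lemma laplace_integral_exp {b t : ℝ} (hb : 0 < b) (ht : |t| < 1/b) :
    ∫ x, Real.exp (t * x) ∂(laplaceMeasure 0 b) = 1 / (1 - t^2 * b^2) := by
  rw [laplaceMeasure]
  have hrepr : (fun x : ℝ => ENNReal.ofReal ((1/(2*b)) * Real.exp (-|x - 0|/b)))
      = fun x : ℝ => (((1/(2*b)) * Real.exp (-|x - 0|/b)).toNNReal : ℝ≥0∞) := rfl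
  rw [hrepr, integral_withDensity_eq_integral_smul
    (by fun_prop : Measurable fun x : ℝ => ((1/(2*b)) * Real.exp (-|x - 0|/b)).toNNReal)]
  have h : ∀ x : ℝ,
      (((1/(2*b)) * Real.exp (-|x - 0|/b)).toNNReal : ℝ≥0) • Real.exp (t * x)
        = Real.exp (t*x) * ((1/(2*b)) * Real.exp (-|x|/b)) := by
    intro x
    rw [NNReal.smul_def, Real.coe_toNNReal _ (by positivity), lap_density_simp, smul_eq_mul]
    ring
  simp only [h]
  exact lap_exp_integral hb ht

lemma one_div_le_exp_two {x : ℝ} (h0 : 0 ≤ x) (h2 : x ≤ 1/2) : 1/(1-x) ≤ Real.exp (2*x) := by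
  have h1 : 0 < 1 - x := by linarith
  rw [div_le_iff₀ h1]
  nlinarith [Real.add_one_le_exp (2*x)]


/-- Concentration of a sum of i.i.d. Laplace random variables
(Corollary 12.4 of Dwork–Roth, used in Lemma `lem:local`): if `Y 1, …, Y m` are
independent `Lap(b)` variables and `ln(2/δ) ≤ m`, then with probability at
least `1 − δ`, `|∑ i, Y i| ≤ b √(8 m ln(2/δ))`. -/
theorem sum_laplace_concentration
    {Ω : Type*} {m0 : MeasurableSpace Ω} {μ : Measure Ω} [IsProbabilityMeasure μ]
    (b : ℝ) (hb : 0 < b) (m : ℕ) (hm : 1 ≤ m)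
    (Y : Fin m → Ω → ℝ) (hYmeas : ∀ i, Measurable (Y i))
    (hindep : iIndepFun Y μ)
    (hlaw : ∀ i, Measure.map (Y i) μ = laplaceMeasure 0 b)
    (δ : ℝ) (hδ : δ ∈ Set.Ioo (0 : ℝ) 1) (hδm : Real.log (2 / δ) ≤ m) :
    ENNReal.ofReal (1 - δ) ≤
      μ {ω | |∑ i, Y i ω| ≤ b * Real.sqrt (8 * m * Real.log (2 / δ))} := by
  obtain ⟨hδ0, hδ1⟩ := hδ
  set L := Real.log (2/δ) with hLdef
  have h2δ : (1:ℝ) < 2/δ := by rw [lt_div_iff₀ hδ0]; linarith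
  have hL : 0 < L := Real.log_pos h2δ
  have hm1 : (1:ℝ) ≤ (m:ℝ) := by exact_mod_cast hm
  have hm0 : (0:ℝ) < (m:ℝ) := by linarith
  set t := Real.sqrt (L/(2*(m:ℝ))) / b with htdef
  have hs_pos : 0 < Real.sqrt (L/(2*(m:ℝ))) := Real.sqrt_pos.mpr (by positivity)
  have ht0 : 0 < t := by positivity
  have hx : t^2 * b^2 = L/(2*(m:ℝ)) := by
    have h : t^2*b^2 = (Real.sqrt (L/(2*(m:ℝ))))^2 := by
      rw [htdef]; field_simp
    rw [h, Real.sq_sqrt (by positivity)]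
  have hx_half : t^2 * b^2 ≤ 1/2 := by
    rw [hx, div_le_div_iff₀ (by positivity) (by norm_num)]
    linarith
  have habs : |t| < 1/b := by
    rw [abs_of_pos ht0]
    have h1 : Real.sqrt (L/(2*(m:ℝ))) < 1 := by
      rw [show (1:ℝ) = Real.sqrt 1 by simp]
      exact Real.sqrt_lt_sqrt (by positivity) (by rw [div_lt_one (by positivity)]; linarith)
    rw [htdef]
    gcongr
  have habs' : |(-t)| < 1/b := by rwa [abs_neg]
  set ν := b * Real.sqrt (8*(m:ℝ)*L) with hνdef
  have hν0 : 0 < ν := by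
    have : 0 < Real.sqrt (8*(m:ℝ)*L) := Real.sqrt_pos.mpr (by positivity)
    positivity
  have htν : t * ν = 2*L := by
    have hsq : Real.sqrt (L/(2*(m:ℝ))) * Real.sqrt (8*(m:ℝ)*L) = 2*L := by
      rw [← Real.sqrt_mul (by positivity),
        show L/(2*(m:ℝ)) * (8*(m:ℝ)*L) = (2*L)^2 by field_simp; ring,
        Real.sqrt_sq (by positivity)]
    have h : t * ν = Real.sqrt (L/(2*(m:ℝ))) * Real.sqrt (8*(m:ℝ)*L) := by
      rw [htdef, hνdef]; field_simp
    rw [h, hsq]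
  -- integrability and mgf of each Y i
  have h_int : ∀ s : ℝ, |s| < 1/b → ∀ i, Integrable (fun ω => Real.exp (s * Y i ω)) μ := by
    intro s hs i
    have h := laplace_integrable_exp hb hs
    rw [← hlaw i] at h
    exact (integrable_map_measure
      ((measurable_id.const_mul s).exp.aestronglyMeasurable)
      (hYmeas i).aemeasurable).mp h
  have h_mgf : ∀ s : ℝ, |s| < 1/b → ∀ i, mgf (Y i) μ s = 1/(1 - s^2*b^2) := by
    intro s hs i
    calc mgf (Y i) μ s = ∫ ω, Real.exp (s * Y i ω) ∂μ := rfl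
      _ = ∫ x, Real.exp (s * x) ∂(Measure.map (Y i) μ) :=
          (integral_map (hYmeas i).aemeasurable ((measurable_id.const_mul s).exp.aestronglyMeasurable)).symm
      _ = 1/(1 - s^2*b^2) := by rw [hlaw i]; exact laplace_integral_exp hb hs
  set S := ∑ i, Y i with hSdef
  have hSapp : S = fun a => ∑ i, Y i a := funext fun a => Finset.sum_apply _ _ _
  have hSmeas : Measurable S := by
    rw [hSapp]; exact Finset.measurable_sum _ fun i _ => hYmeas i
  have h_int_S : ∀ s : ℝ, |s| < 1/b → Integrable (fun ω => Real.exp (s * S ω)) μ :=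
    fun s hs => hindep.integrable_exp_mul_sum hYmeas (fun i _ => h_int s hs i)
  have h_mgf_S : ∀ s : ℝ, |s| < 1/b → s^2*b^2 = L/(2*(m:ℝ)) → mgf S μ s ≤ Real.exp L := by
    intro s hs hseq
    have hs2 : s^2*b^2 ≤ 1/2 := by
      rw [hseq, div_le_div_iff₀ (by positivity) (by norm_num)]; linarith
    have hs2' : 0 ≤ s^2*b^2 := by positivity
    have hsum : mgf S μ s = (1/(1 - s^2*b^2))^m := by
      rw [hSdef, hindep.mgf_sum hYmeas Finset.univ,
        Finset.prod_congr rfl (fun i _ => h_mgf s hs i), Finset.prod_const,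
        Finset.card_univ, Fintype.card_fin]
    rw [hsum]
    calc (1/(1 - s^2*b^2))^m ≤ (Real.exp (2*(s^2*b^2)))^m := by
          have hpos : (0:ℝ) < 1 - s^2*b^2 := by linarith
          exact pow_le_pow_left₀ (div_nonneg zero_le_one hpos.le) (one_div_le_exp_two hs2' hs2) m
      _ = Real.exp ((m:ℝ) * (2*(s^2*b^2))) := by rw [Real.exp_nat_mul]
      _ = Real.exp L := by rw [hseq]; congr 1; field_simp
  -- Chernoff bounds
  have hhalf : Real.exp (-(2*L)) * Real.exp L = δ/2 := by
    rw [← Real.exp_add, show -(2*L) + L = -L by ring, Real.exp_neg, hLdef,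
      Real.exp_log (by positivity), inv_div]
  have up : (μ {ω | ν ≤ S ω}).toReal ≤ δ/2 := by
    have h := measure_ge_le_exp_mul_mgf (μ := μ) (X := S) (t := t) ν ht0.le (h_int_S t habs)
    calc (μ {ω | ν ≤ S ω}).toReal ≤ Real.exp (-t * ν) * mgf S μ t := h
      _ ≤ Real.exp (-(2*L)) * Real.exp L := by
          rw [show -t * ν = -(2*L) by rw [neg_mul, htν]]
          exact mul_le_mul_of_nonneg_left (h_mgf_S t habs hx) (Real.exp_pos _).le
      _ = δ/2 := hhalf
  have down : (μ {ω | S ω ≤ -ν}).toReal ≤ δ/2 := by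
    have h := measure_le_le_exp_mul_mgf (μ := μ) (X := S) (t := -t) (-ν)
      (neg_nonpos.mpr ht0.le) (h_int_S (-t) habs')
    calc (μ {ω | S ω ≤ -ν}).toReal ≤ Real.exp (-(-t) * -ν) * mgf S μ (-t) := h
      _ ≤ Real.exp (-(2*L)) * Real.exp L := by
          rw [show -(-t) * -ν = -(2*L) by rw [neg_neg, mul_neg, htν]]
          refine mul_le_mul_of_nonneg_left (h_mgf_S (-t) habs' ?_) (Real.exp_pos _).le
          rw [neg_pow, show ((-1:ℝ))^2 = 1 by norm_num, one_mul, hx]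
      _ = δ/2 := hhalf
  -- combine
  have hsetE : {ω | |∑ i, Y i ω| ≤ b * Real.sqrt (8 * (m:ℝ) * L)} = {ω | |S ω| ≤ ν} := by
    ext ω
    simp only [Set.mem_setOf_eq, hSdef, Finset.sum_apply, hνdef]
  rw [hsetE]
  have hEmeas : MeasurableSet {ω | |S ω| ≤ ν} := measurableSet_le hSmeas.abs measurable_const
  have hcompl : {ω | |S ω| ≤ ν}ᶜ ⊆ {ω | ν ≤ S ω} ∪ {ω | S ω ≤ -ν} := by
    intro ω hω
    simp only [Set.mem_compl_iff, Set.mem_setOf_eq, not_le] at hω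
    rcases abs_cases (S ω) with ⟨he, _⟩ | ⟨he, _⟩
    · left; rw [Set.mem_setOf_eq, ← he]; exact hω.le
    · right; rw [Set.mem_setOf_eq]; linarith [he ▸ hω]
  have hcompl_le : (μ {ω | |S ω| ≤ ν}ᶜ).toReal ≤ δ := by
    have h1 : μ {ω | |S ω| ≤ ν}ᶜ ≤ μ {ω | ν ≤ S ω} + μ {ω | S ω ≤ -ν} :=
      (measure_mono hcompl).trans (measure_union_le _ _)
    have h2 : (μ {ω | |S ω| ≤ ν}ᶜ).toReal
        ≤ (μ {ω | ν ≤ S ω}).toReal + (μ {ω | S ω ≤ -ν}).toReal := by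
      rw [← ENNReal.toReal_add (measure_ne_top μ _) (measure_ne_top μ _)]
      exact ENNReal.toReal_mono
        (ENNReal.add_ne_top.mpr ⟨measure_ne_top μ _, measure_ne_top μ _⟩) h1
    linarith
  have hsum1 : (μ {ω | |S ω| ≤ ν}).toReal + (μ {ω | |S ω| ≤ ν}ᶜ).toReal = 1 := by
    rw [← ENNReal.toReal_add (measure_ne_top μ _) (measure_ne_top μ _),
      measure_add_measure_compl hEmeas]
    simp
  calc ENNReal.ofReal (1 - δ) ≤ ENNReal.ofReal ((μ {ω | |S ω| ≤ ν}).toReal) :=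
        ENNReal.ofReal_le_ofReal (by linarith)
    _ = μ {ω | |S ω| ≤ ν} := ENNReal.ofReal_toReal (measure_ne_top μ _)
end

section
/- Let b > 0, let m ≥ 1 be an integer, and let Y_1, …, Y_m be independent real random variables each distributed as Lap(b). Then for every t with 0 ≤ t ≤ 2√2·m·b, P( |∑_{i=1}^m Y_i| ≥ t ) ≤ 2·exp( − t² / (8·m·b²) ). -/
open MeasureTheory ProbabilityTheory

open Set Real
open scoped NNReal ENNReal

lemma lap_integral_exp_neg_mul_Ioi {r : ℝ} (hr : 0 < r) :
    ∫ x in Ioi (0:ℝ), Real.exp (-(r * x)) = r⁻¹ := by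
  have h := MeasureTheory.integral_comp_mul_left_Ioi (fun x => Real.exp (-x)) 0 hr
  rw [mul_zero] at h
  rw [h, integral_exp_neg_Ioi_zero, smul_eq_mul, mul_one]

lemma lap_integrableOn_exp_neg_mul_Ioi {r : ℝ} (hr : 0 < r) :
    IntegrableOn (fun x : ℝ => Real.exp (-(r * x))) (Ioi 0) := by
  simpa [neg_mul] using exp_neg_integrableOn_Ioi 0 hr

lemma lap_integral_exp_mul_Iic {r : ℝ} (hr : 0 < r) :
    ∫ x in Iic (0:ℝ), Real.exp (r * x) = r⁻¹ := by
  have h := integral_comp_neg_Iic (0:ℝ) (fun x => Real.exp (-(r * x)))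
  simp only [mul_neg, neg_neg, neg_zero] at h
  rw [h, lap_integral_exp_neg_mul_Ioi hr]

lemma lap_integrableOn_exp_mul_Iic {r : ℝ} (hr : 0 < r) :
    IntegrableOn (fun x : ℝ => Real.exp (r * x)) (Iic 0) := by
  rw [IntegrableOn, ← Measure.map_neg_eq_self (volume : Measure ℝ)]
  have m : MeasurableEmbedding fun x : ℝ => -x := (Homeomorph.neg ℝ).measurableEmbedding
  rw [m.restrict_map, m.integrable_map_iff]
  simp_rw [Function.comp_def, neg_preimage, neg_Iic, neg_zero, mul_neg, ← neg_mul]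
  exact Iff.mpr integrableOn_Ici_iff_integrableOn_Ioi (exp_neg_integrableOn_Ioi 0 hr)

lemma laplace_exp_integral {b : ℝ} (hb : 0 < b) {c : ℝ} (hc1 : c * b < 1) (hc2 : -1 < c * b) :
    Integrable (fun x => Real.exp (c * x)) (laplaceMeasure 0 b) ∧
    ∫ x, Real.exp (c * x) ∂(laplaceMeasure 0 b) = (1 - c ^ 2 * b ^ 2)⁻¹ := by
  have hb' : b ≠ 0 := hb.ne'
  set h : ℝ → ℝ := fun x => (1 / (2 * b)) * Real.exp (-|x| / b) with hh
  have hhnn : ∀ x, 0 ≤ h x := fun x =>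
    mul_nonneg (by positivity) (Real.exp_nonneg _)
  have hmeas : Measurable fun x => Real.toNNReal (h x) := by
    apply Measurable.real_toNNReal
    exact (measurable_const.mul (((measurable_abs.neg).div_const b).exp))
  have hlap : laplaceMeasure 0 b
      = volume.withDensity (fun x => ((Real.toNNReal (h x) : ℝ≥0) : ℝ≥0∞)) := by
    unfold laplaceMeasure
    simp only [sub_zero, ENNReal.ofReal]
    rfl
  -- positive rates
  have hrp : 0 < 1 / b - c := by
    have : c < 1 / b := by
      rw [lt_div_iff₀ hb]; exact hc1
    linarith
  have hrm : 0 < 1 / b + c := by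
    have : -(1 / b) < c := by
      rw [neg_lt, lt_div_iff₀ hb]
      nlinarith
    linarith
  set G : ℝ → ℝ := fun x => h x * Real.exp (c * x) with hG
  -- integrable on Ioi 0
  have heqIoi : Set.EqOn (fun x => (1 / (2 * b)) * Real.exp (-((1 / b - c) * x))) G (Ioi 0) := by
    intro x hx
    have hx0 : 0 ≤ x := le_of_lt hx
    simp only [hG, hh, abs_of_nonneg hx0]
    rw [mul_assoc, ← Real.exp_add]
    congr 1
    field_simp
    try ring
  have heqIic : Set.EqOn (fun x => (1 / (2 * b)) * Real.exp ((1 / b + c) * x)) G (Iic 0) := by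
    intro x hx
    have hx0 : x ≤ 0 := hx
    simp only [hG, hh, abs_of_nonpos hx0]
    rw [mul_assoc, ← Real.exp_add]
    congr 1
    field_simp
    try ring
  have hGIoi : IntegrableOn G (Ioi 0) := by
    have base : IntegrableOn (fun x => (1 / (2 * b)) * Real.exp (-((1 / b - c) * x)))
        (Ioi 0) volume := (lap_integrableOn_exp_neg_mul_Ioi hrp).const_mul _
    exact base.congr_fun heqIoi measurableSet_Ioi
  have hGIic : IntegrableOn G (Iic 0) := by
    have base : IntegrableOn (fun x => (1 / (2 * b)) * Real.exp ((1 / b + c) * x))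
        (Iic 0) volume := (lap_integrableOn_exp_mul_Iic hrm).const_mul _
    exact base.congr_fun heqIic measurableSet_Iic
  have hGint : Integrable G := by
    rw [← integrableOn_univ, ← Iic_union_Ioi (a := (0:ℝ))]
    exact hGIic.union hGIoi
  have hsmul : ∀ x : ℝ, Real.toNNReal (h x) • Real.exp (c * x) = G x := fun x => by
    simp only [NNReal.smul_def, smul_eq_mul, Real.coe_toNNReal _ (hhnn x), hG]
  constructor
  · rw [hlap]
    rw [integrable_withDensity_iff_integrable_smul hmeas]
    exact hGint.congr (Filter.Eventually.of_forall fun x => (hsmul x).symm)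
  · rw [hlap, integral_withDensity_eq_integral_smul hmeas]
    simp_rw [hsmul]
    rw [← intervalIntegral.integral_Iic_add_Ioi hGIic hGIoi]
    have hIoi : ∫ x in Ioi (0:ℝ), G x = (1 / (2 * b)) * (1 / b - c)⁻¹ := by
      rw [← setIntegral_congr_fun measurableSet_Ioi heqIoi,
        integral_const_mul, lap_integral_exp_neg_mul_Ioi hrp]
    have hIic : ∫ x in Iic (0:ℝ), G x = (1 / (2 * b)) * (1 / b + c)⁻¹ := by
      rw [← setIntegral_congr_fun measurableSet_Iic heqIic,
        integral_const_mul, lap_integral_exp_mul_Iic hrm]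
    rw [hIoi, hIic]
    have h1 : (0:ℝ) < 1 - c ^ 2 * b ^ 2 := by nlinarith
    have hcb1 : (0:ℝ) < 1 + c * b := by nlinarith
    have hcb2 : (0:ℝ) < 1 - c * b := by nlinarith
    have e1 : 1 / (2 * b) * (1 / b + c)⁻¹ = (2 * (1 + c * b))⁻¹ := by
      rw [one_div, ← mul_inv]
      congr 1
      field_simp
      try ring
    have e2 : 1 / (2 * b) * (1 / b - c)⁻¹ = (2 * (1 - c * b))⁻¹ := by
      rw [one_div, ← mul_inv]
      congr 1
      field_simp
      try ring
    rw [e1, e2, inv_add_inv (by positivity) (by positivity),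
      inv_eq_one_div (1 - c ^ 2 * b ^ 2),
      div_eq_div_iff (by positivity) (ne_of_gt h1)]
    ring

lemma lap_mgf_eq {Ω : Type*} [MeasurableSpace Ω] {μ : Measure Ω} {Y : Ω → ℝ}
    (hY : Measurable Y) {b : ℝ} (hb : 0 < b) (hlaw : Measure.map Y μ = laplaceMeasure 0 b)
    {c : ℝ} (hc1 : c * b < 1) (hc2 : -1 < c * b) :
    Integrable (fun ω => Real.exp (c * Y ω)) μ ∧ mgf Y μ c = (1 - c ^ 2 * b ^ 2)⁻¹ := by
  obtain ⟨hint, hval⟩ := laplace_exp_integral hb hc1 hc2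
  have hsm : AEStronglyMeasurable (fun x => Real.exp (c * x)) (Measure.map Y μ) :=
    (Real.continuous_exp.comp (continuous_const.mul continuous_id)).aestronglyMeasurable
  rw [← hlaw] at hint hval
  constructor
  · exact (integrable_map_measure hsm hY.aemeasurable).mp hint
  · rw [mgf, ← integral_map hY.aemeasurable hsm, hval]

lemma lap_inv_one_sub_le_exp {u : ℝ} (h0 : 0 ≤ u) (h1 : u ≤ 1 / 2) :
    (1 - u)⁻¹ ≤ Real.exp (2 * u) := by
  have h2 : (0:ℝ) < 1 - u := by linarith
  rw [inv_le_iff_one_le_mul₀ h2]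
  nlinarith [Real.add_one_le_exp (2 * u), mul_nonneg h0 (by linarith : (0:ℝ) ≤ 1 - 2 * u)]

/-- Tail bound for a sum of i.i.d. Laplace random variables (the measure
concentration underlying Theorem 3.6 of Chan–Shi–Song and Corollary 12.4 of
Dwork–Roth): if `Y 1, …, Y m` are independent `Lap(b)` variables, then for any
`0 ≤ t ≤ 2√2 · m · b`, `P(|∑ i, Y i| ≥ t) ≤ 2 exp(−t²/(8 m b²))`. -/
theorem sum_laplace_tail_bound
    {Ω : Type*} {m0 : MeasurableSpace Ω} {μ : Measure Ω} [IsProbabilityMeasure μ]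
    (b : ℝ) (hb : 0 < b) (m : ℕ) (hm : 1 ≤ m)
    (Y : Fin m → Ω → ℝ) (hYmeas : ∀ i, Measurable (Y i))
    (hindep : iIndepFun Y μ)
    (hlaw : ∀ i, Measure.map (Y i) μ = laplaceMeasure 0 b)
    (t : ℝ) (ht0 : 0 ≤ t) (ht : t ≤ 2 * Real.sqrt 2 * m * b) :
    μ {ω | t ≤ |∑ i, Y i ω|} ≤
      ENNReal.ofReal (2 * Real.exp (-(t ^ 2) / (8 * m * b ^ 2))) := by
  have hm' : (0:ℝ) < (m:ℝ) := by exact_mod_cast hm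
  set lam : ℝ := t / (4 * m * b ^ 2) with hlam
  have hlam0 : 0 ≤ lam := by positivity
  have hlamb : lam * b ≤ Real.sqrt 2 / 2 := by
    rw [hlam, div_mul_eq_mul_div, div_le_div_iff₀ (by positivity) (by norm_num)]
    nlinarith [mul_le_mul_of_nonneg_right ht hb.le]
  have hsqrt2 : Real.sqrt 2 < 2 := by
    nlinarith [Real.sq_sqrt (by norm_num : (0:ℝ) ≤ 2), Real.sqrt_nonneg 2]
  have hlamb1 : lam * b < 1 := by
    calc lam * b ≤ Real.sqrt 2 / 2 := hlamb
      _ < 1 := by linarith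
  have hlamb2 : -1 < lam * b := by
    have : 0 ≤ lam * b := mul_nonneg hlam0 hb.le
    linarith
  set u : ℝ := lam ^ 2 * b ^ 2 with hu
  have hu0 : 0 ≤ u := by positivity
  have hu12 : u ≤ 1 / 2 := by
    have h1 : lam * b ≤ Real.sqrt 2 / 2 := hlamb
    have h2 : (lam * b) ^ 2 ≤ (Real.sqrt 2 / 2) ^ 2 := by
      apply pow_le_pow_left₀ (mul_nonneg hlam0 hb.le) h1
    have h3 : (Real.sqrt 2 / 2) ^ 2 = 1 / 2 := by
      rw [div_pow, Real.sq_sqrt (by norm_num : (0:ℝ) ≤ 2)]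
      norm_num
    calc u = (lam * b) ^ 2 := by ring
      _ ≤ 1 / 2 := by rw [← h3] at *; exact h2
  have h1u : (0:ℝ) < 1 - u := by linarith
  -- mgf facts for ±lam
  have hmlamb1 : -lam * b < 1 := by nlinarith
  have hmlamb2 : -1 < -lam * b := by nlinarith
  have hmgfp := fun i => lap_mgf_eq (hYmeas i) hb (hlaw i) hlamb1 hlamb2
  have hmgfm := fun i => lap_mgf_eq (hYmeas i) hb (hlaw i) hmlamb1 hmlamb2
  have hintp : Integrable (fun ω => Real.exp (lam * (∑ i, Y i) ω)) μ :=
    hindep.integrable_exp_mul_sum hYmeas (fun i _ => (hmgfp i).1)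
  have hintm : Integrable (fun ω => Real.exp (-lam * (∑ i, Y i) ω)) μ :=
    hindep.integrable_exp_mul_sum hYmeas (fun i _ => (hmgfm i).1)
  -- mgf of the sum
  have hneg_sq : (-lam) ^ 2 = lam ^ 2 := by ring
  have hmgfsum : mgf (∑ i, Y i) μ lam = ((1 - u)⁻¹) ^ m := by
    rw [hindep.mgf_sum hYmeas Finset.univ]
    simp only [(hmgfp _).2, Finset.prod_const, Finset.card_univ, Fintype.card_fin, hu]
  have hmgfsum' : mgf (∑ i, Y i) μ (-lam) = ((1 - u)⁻¹) ^ m := by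
    rw [hindep.mgf_sum hYmeas Finset.univ]
    simp only [(hmgfm _).2, hneg_sq, Finset.prod_const, Finset.card_univ, Fintype.card_fin, hu]
  -- the common exponential bound
  have hmgf_le : ((1 - u)⁻¹) ^ m ≤ Real.exp ((m : ℝ) * (2 * u)) := by
    rw [Real.exp_nat_mul]
    exact pow_le_pow_left₀ (inv_nonneg.mpr h1u.le) (lap_inv_one_sub_le_exp hu0 hu12) m
  have hexp_eq : -lam * t + (m : ℝ) * (2 * u) = -(t ^ 2) / (8 * m * b ^ 2) := by
    rw [hu, hlam]
    field_simp
    ring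
  have key : ∀ s : ℝ, Real.exp (-lam * s) * ((1 - u)⁻¹) ^ m
      ≤ Real.exp (-(t ^ 2) / (8 * m * b ^ 2)) → True := fun _ _ => trivial
  have hEbound : Real.exp (-lam * t) * ((1 - u)⁻¹) ^ m
      ≤ Real.exp (-(t ^ 2) / (8 * m * b ^ 2)) := by
    calc Real.exp (-lam * t) * ((1 - u)⁻¹) ^ m
        ≤ Real.exp (-lam * t) * Real.exp ((m : ℝ) * (2 * u)) := by
          exact mul_le_mul_of_nonneg_left hmgf_le (Real.exp_nonneg _)
      _ = Real.exp (-lam * t + (m : ℝ) * (2 * u)) := (Real.exp_add _ _).symm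
      _ = Real.exp (-(t ^ 2) / (8 * m * b ^ 2)) := by rw [hexp_eq]
  -- Chernoff both tails
  have hup : μ {ω | t ≤ (∑ i, Y i) ω} ≤ ENNReal.ofReal (Real.exp (-(t^2) / (8 * m * b ^ 2))) := by
    rw [ENNReal.le_ofReal_iff_toReal_le (measure_ne_top μ _) (Real.exp_nonneg _)]
    calc (μ {ω | t ≤ (∑ i, Y i) ω}).toReal
        ≤ Real.exp (-lam * t) * mgf (∑ i, Y i) μ lam :=
          measure_ge_le_exp_mul_mgf t hlam0 hintp
      _ ≤ _ := by rw [hmgfsum]; exact hEbound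
  have hdown : μ {ω | (∑ i, Y i) ω ≤ -t}
      ≤ ENNReal.ofReal (Real.exp (-(t^2) / (8 * m * b ^ 2))) := by
    rw [ENNReal.le_ofReal_iff_toReal_le (measure_ne_top μ _) (Real.exp_nonneg _)]
    calc (μ {ω | (∑ i, Y i) ω ≤ -t}).toReal
        ≤ Real.exp (-(-lam) * (-t)) * mgf (∑ i, Y i) μ (-lam) :=
          measure_le_le_exp_mul_mgf (-t) (neg_nonpos.mpr hlam0) hintm
      _ ≤ _ := by
          rw [hmgfsum']
          have : -(-lam) * (-t) = -lam * t := by ring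
          rw [this]
          exact hEbound
  calc μ {ω | t ≤ |∑ i, Y i ω|}
      ≤ μ ({ω | t ≤ (∑ i, Y i) ω} ∪ {ω | (∑ i, Y i) ω ≤ -t}) := by
        apply measure_mono
        intro ω hω
        have hω' : t ≤ |∑ i, Y i ω| := hω
        simp only [Set.mem_setOf_eq, Finset.sum_apply, Set.mem_union]
        rcases le_abs.mp hω' with h | h
        · left; simpa [Finset.sum_apply] using h
        · right
          have h' : t ≤ -(∑ i, Y i ω) := h
          linarith
    _ ≤ μ {ω | t ≤ (∑ i, Y i) ω} + μ {ω | (∑ i, Y i) ω ≤ -t} := measure_union_le _ _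
    _ ≤ ENNReal.ofReal (Real.exp (-(t^2) / (8 * m * b ^ 2)))
        + ENNReal.ofReal (Real.exp (-(t^2) / (8 * m * b ^ 2))) := add_le_add hup hdown
    _ = ENNReal.ofReal (2 * Real.exp (-(t ^ 2) / (8 * m * b ^ 2))) := by
        rw [← ENNReal.ofReal_add (Real.exp_nonneg _) (Real.exp_nonneg _)]
        congr 1
        ring
end

section
/- Let n ≥ 1 be an integer, b > 0, Δ ≥ 0, and let x, x′ ∈ ℝⁿ satisfy ∑_{i=1}^n |x_i − x′_i| ≤ Δ. Let μ_x be the product over i = 1, …, n of the Laplace distributions with location x_i and scale b, and define μ_{x′} analogously. Then for every Borel measurable set A ⊆ ℝⁿ, μ_x(A) ≤ exp(Δ/b)·μ_{x′}(A). -/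
open MeasureTheory ProbabilityTheory
open scoped NNReal ENNReal

instance laplaceMeasure.sigmaFinite (a b : ℝ) : SigmaFinite (laplaceMeasure a b) := by
  unfold laplaceMeasure; infer_instance

/-- Monotonicity of the product measure. -/
lemma measure_pi_mono_aux {ι : Type*} [Fintype ι] {α : ι → Type*} [∀ i, MeasurableSpace (α i)]
    {μ ν : ∀ i, Measure (α i)} (h : ∀ i, μ i ≤ ν i) :
    Measure.pi μ ≤ Measure.pi ν := by
  refine Measure.le_iff.2 fun s hs => ?_
  rw [Measure.pi, Measure.pi, toMeasure_apply _ _ hs, toMeasure_apply _ _ hs]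
  have hle : (OuterMeasure.pi fun i => (μ i).toOuterMeasure) ≤
      OuterMeasure.pi fun i => (ν i).toOuterMeasure := by
    conv_rhs => rw [OuterMeasure.pi]
    rw [OuterMeasure.le_boundedBy]
    intro t
    calc OuterMeasure.pi (fun i => (μ i).toOuterMeasure) t
        ≤ piPremeasure (fun i => (μ i).toOuterMeasure) t := by
          conv_lhs => rw [OuterMeasure.pi]
          exact OuterMeasure.boundedBy_le _
      _ ≤ piPremeasure (fun i => (ν i).toOuterMeasure) t := by
          simp only [piPremeasure]
          exact Finset.prod_le_prod' fun i _ => (h i) _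
  exact hle _

/-- Scalar multiples pull out of product measures. -/
lemma measure_pi_smul_aux {ι : Type*} [Fintype ι] {α : ι → Type*} [∀ i, MeasurableSpace (α i)]
    (μ : ∀ i, Measure (α i)) [∀ i, SigmaFinite (μ i)] (c : ι → ℝ≥0) :
    Measure.pi (fun i => c i • μ i) = (∏ i, c i) • Measure.pi μ := by
  refine Measure.pi_eq (μ := fun i => c i • μ i) (μ' := (∏ i, c i) • Measure.pi μ) fun s hs => ?_
  simp only [Measure.smul_apply, Measure.pi_pi, smul_eq_mul, ENNReal.coe_finset_prod]
  simp only [ENNReal.smul_def, smul_eq_mul, ENNReal.coe_finset_prod]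
  rw [← Finset.prod_mul_distrib]

/-- Differential privacy of the vector Laplace mechanism: if `x, x' ∈ ℝⁿ`
satisfy `∑ i, |x i − x' i| ≤ Δ`, then for every Borel set `A ⊆ ℝⁿ`, the product
Laplace measures centered at `x` and `x'` with common scale `b` satisfy
`μ_x(A) ≤ exp(Δ/b) · μ_{x'}(A)`. -/
theorem laplace_mechanism_dp
    (n : ℕ) (hn : 1 ≤ n) (b Δ : ℝ) (hb : 0 < b) (hΔ : 0 ≤ Δ)
    (x x' : Fin n → ℝ) (hsens : ∑ i, |x i - x' i| ≤ Δ)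
    (A : Set (Fin n → ℝ)) (hA : MeasurableSet A) :
    Measure.pi (fun i => laplaceMeasure (x i) b) A ≤
      ENNReal.ofReal (Real.exp (Δ / b)) *
        Measure.pi (fun i => laplaceMeasure (x' i) b) A := by
  set c : Fin n → ℝ≥0 := fun i => (Real.exp (|x i - x' i| / b)).toNNReal with hc
  have hcoe : ∀ i, (c i : ℝ≥0∞) = ENNReal.ofReal (Real.exp (|x i - x' i| / b)) := fun i => rfl
  have key : ∀ i, laplaceMeasure (x i) b ≤ (c i) • laplaceMeasure (x' i) b := by
    intro i
    have hne : (c i : ℝ≥0∞) ≠ ∞ := ENNReal.coe_ne_top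
    rw [laplaceMeasure, laplaceMeasure, ENNReal.smul_def,
      ← withDensity_smul' (c i : ℝ≥0∞) _ hne]
    refine withDensity_mono (Filter.Eventually.of_forall fun y => ?_)
    simp only [Pi.smul_apply, smul_eq_mul, hcoe]
    rw [← ENNReal.ofReal_mul (Real.exp_nonneg _)]
    refine ENNReal.ofReal_le_ofReal ?_
    rw [mul_left_comm, ← Real.exp_add]
    have htri : |y - x' i| ≤ |y - x i| + |x i - x' i| := abs_sub_le y (x i) (x' i)
    have hexp : Real.exp (-|y - x i| / b) ≤ Real.exp (|x i - x' i| / b + -|y - x' i| / b) := by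
      apply Real.exp_le_exp.2
      rw [← add_div]
      gcongr
      linarith
    have h2b : 0 ≤ 1 / (2 * b) := by positivity
    exact mul_le_mul_of_nonneg_left hexp h2b
  have hpi : Measure.pi (fun i => laplaceMeasure (x i) b) ≤
      Measure.pi (fun i => (c i) • laplaceMeasure (x' i) b) := measure_pi_mono_aux key
  have hprod : (∏ i, (c i : ℝ≥0∞)) ≤ ENNReal.ofReal (Real.exp (Δ / b)) := by
    have : (∏ i, (c i : ℝ≥0∞)) = ENNReal.ofReal (∏ i, Real.exp (|x i - x' i| / b)) := by
      rw [ENNReal.ofReal_prod_of_nonneg fun i _ => Real.exp_nonneg _]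
      exact Finset.prod_congr rfl fun i _ => hcoe i
    rw [this, ← Real.exp_sum]
    refine ENNReal.ofReal_le_ofReal (Real.exp_le_exp.2 ?_)
    rw [← Finset.sum_div]
    gcongr
  calc Measure.pi (fun i => laplaceMeasure (x i) b) A
      ≤ Measure.pi (fun i => (c i) • laplaceMeasure (x' i) b) A := hpi A
    _ = (∏ i, (c i : ℝ≥0∞)) * Measure.pi (fun i => laplaceMeasure (x' i) b) A := by
        rw [measure_pi_smul_aux]
        simp [Measure.smul_apply, ENNReal.coe_finset_prod]
    _ ≤ ENNReal.ofReal (Real.exp (Δ / b)) * Measure.pi (fun i => laplaceMeasure (x' i) b) A :=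
        mul_le_mul_left hprod _
end

section
/- Let A be a finite nonempty set, K ≥ 1 an integer, H > 0, and for each k ∈ {1,…,K} let q_k : A → [0, H]. Fix η > 0 and define probability distributions p_k on A by p_1(a) = 1/|A| for all a, and p_{k+1}(a) = p_k(a)·exp(−η·q_k(a)) / ∑_{a′ ∈ A} p_k(a′)·exp(−η·q_k(a′)). Then: (i) for every probability distribution p on A, ∑_{k=1}^K ∑_{a ∈ A} q_k(a)·(p_k(a) − p(a)) ≤ log|A|/η + (η/2)·∑_{k=1}^K ∑_{a ∈ A} p_k(a)·q_k(a)²; and (ii) if η = √(2·log|A| / (H²·K)), then for every probability distribution p on A, ∑_{k=1}^K ∑_{a ∈ A} q_k(a)·(p_k(a) − p(a)) ≤ √(2·H²·K·log|A|). -/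
open Finset

lemma exp_neg_le_quad (x : ℝ) (hx : 0 ≤ x) :
    Real.exp (-x) ≤ 1 - x + x ^ 2 / 2 := by
  have key : MonotoneOn (fun t : ℝ => 1 - t + t ^ 2 / 2 - Real.exp (-t)) (Set.Ici 0) := by
    apply monotoneOn_of_deriv_nonneg (convex_Ici 0)
    · fun_prop
    · fun_prop
    · intro t ht
      have hd : HasDerivAt (fun t : ℝ => 1 - t + t ^ 2 / 2 - Real.exp (-t))
          (-1 + t + Real.exp (-t)) t := by
        have h1 : HasDerivAt (fun t : ℝ => -t) (-1) t := (hasDerivAt_id t).neg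
        have h2 : HasDerivAt (fun t : ℝ => Real.exp (-t)) (Real.exp (-t) * (-1)) t :=
          (Real.hasDerivAt_exp (-t)).comp t h1
        have h3 : HasDerivAt (fun t : ℝ => 1 - t + t ^ 2 / 2)
            (-1 + t) t := by
          have := ((hasDerivAt_pow 2 t).div_const 2)
          have h4 := ((hasDerivAt_const t (1:ℝ)).sub (hasDerivAt_id t)).add this
          exact h4.congr_deriv (by norm_num)
        have := h3.sub h2
        exact this.congr_deriv (by ring)
      rw [hd.deriv]
      have := Real.add_one_le_exp (-t)
      simp only [interior_Ici, Set.mem_Ioi] at ht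
      nlinarith
  · have h0 : (fun t : ℝ => 1 - t + t ^ 2 / 2 - Real.exp (-t)) 0 = 0 := by simp
    have := key (Set.self_mem_Ici) hx hx
    simp only [h0] at this
    linarith [this]

/-- Online mirror descent / exponential weights regret bound (Lemma 17 of
Efroni et al., used to bound the term `𝒯₂`): for losses `q k : A → [0,H]` and
the exponential-weights iterates `p k` started from the uniform distribution,
(i) for every distribution `pp` on `A`,
`∑_k ∑_a q k a (p k a − pp a) ≤ log|A|/η + (η/2) ∑_k ∑_a p k a (q k a)²`;
(ii) with `η = √(2 log|A|/(H² K))`, the left-hand side is at most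
`√(2 H² K log|A|)`. -/
theorem exponential_weights_regret
    {A : Type*} [Fintype A] [Nonempty A]
    (K : ℕ) (hK : 1 ≤ K) (H : ℝ) (hH : 0 < H)
    (q : ℕ → A → ℝ) (hq : ∀ k ∈ Finset.Icc 1 K, ∀ a, q k a ∈ Set.Icc (0 : ℝ) H)
    (η : ℝ) (hη : 0 < η)
    (p : ℕ → A → ℝ)
    (hp1 : ∀ a, p 1 a = 1 / (Fintype.card A : ℝ))
    (hrec : ∀ k, 1 ≤ k → ∀ a, p (k + 1) a =
      p k a * Real.exp (-η * q k a) /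
        ∑ a', p k a' * Real.exp (-η * q k a')) :
    (∀ pp : A → ℝ, (∀ a, 0 ≤ pp a) → (∀ a, pp a ≤ 1) → ∑ a, pp a = 1 →
      ∑ k ∈ Finset.Icc 1 K, ∑ a, q k a * (p k a - pp a) ≤
        Real.log (Fintype.card A) / η
          + η / 2 * ∑ k ∈ Finset.Icc 1 K, ∑ a, p k a * (q k a) ^ 2)
    ∧ (η = Real.sqrt (2 * Real.log (Fintype.card A) / (H ^ 2 * K)) →
        ∀ pp : A → ℝ, (∀ a, 0 ≤ pp a) → (∀ a, pp a ≤ 1) → ∑ a, pp a = 1 →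
          ∑ k ∈ Finset.Icc 1 K, ∑ a, q k a * (p k a - pp a) ≤
            Real.sqrt (2 * H ^ 2 * K * Real.log (Fintype.card A))) := by
  have hNpos : (0 : ℝ) < (Fintype.card A : ℝ) := by
    exact_mod_cast Fintype.card_pos
  -- p is a positive probability distribution for all k ≥ 1
  have hdist : ∀ n : ℕ, (∀ a, 0 < p (n + 1) a) ∧ (∑ a, p (n + 1) a) = 1 := by
    intro n
    induction n with
    | zero =>
      constructor
      · intro a; rw [hp1 a]; positivity
      · simp only [hp1]
        rw [Finset.sum_const, Finset.card_univ, nsmul_eq_mul]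
        field_simp
    | succ n ih =>
      obtain ⟨hpos, hsum⟩ := ih
      have hZ : 0 < ∑ a', p (n + 1) a' * Real.exp (-η * q (n + 1) a') := by
        apply Finset.sum_pos
        · intro a _; exact mul_pos (hpos a) (Real.exp_pos _)
        · exact Finset.univ_nonempty
      constructor
      · intro a
        rw [hrec (n + 1) (Nat.le_add_left 1 n) a]
        exact div_pos (mul_pos (hpos a) (Real.exp_pos _)) hZ
      · have : ∀ a, p (n + 1 + 1) a = p (n + 1) a * Real.exp (-η * q (n + 1) a) /
            ∑ a', p (n + 1) a' * Real.exp (-η * q (n + 1) a') :=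
          hrec (n + 1) (Nat.le_add_left 1 n)
        simp only [this]
        rw [← Finset.sum_div, div_self (ne_of_gt hZ)]
  have hpos : ∀ k, 1 ≤ k → ∀ a, 0 < p k a := by
    intro k hk a
    obtain ⟨n, rfl⟩ := Nat.exists_eq_add_of_le hk
    exact (hdist n).1 a |>.trans_le (le_of_eq (by rw [Nat.add_comm])) |>.trans_le le_rfl
      |>.trans_le (le_of_eq rfl)
  have hsum1 : ∀ k, 1 ≤ k → (∑ a, p k a) = 1 := by
    intro k hk
    obtain ⟨n, rfl⟩ := Nat.exists_eq_add_of_le hk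
    rw [Nat.add_comm]
    exact (hdist n).2
  set Z : ℕ → ℝ := fun k => ∑ a', p k a' * Real.exp (-η * q k a') with hZdef
  have hZpos : ∀ k, 1 ≤ k → 0 < Z k := by
    intro k hk
    apply Finset.sum_pos
    · intro a _; exact mul_pos (hpos k hk a) (Real.exp_pos _)
    · exact Finset.univ_nonempty
  -- per-step inequality
  have hstep : ∀ k ∈ Finset.Icc 1 K,
      Real.log (Z k) ≤ -η * (∑ a, q k a * p k a) + η ^ 2 / 2 * ∑ a, p k a * (q k a) ^ 2 := by
    intro k hk
    have hk1 : 1 ≤ k := (Finset.mem_Icc.mp hk).1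
    have hZle : Z k ≤ 1 - η * (∑ a, q k a * p k a) + η ^ 2 / 2 * ∑ a, p k a * (q k a) ^ 2 := by
      have hterm : ∀ a ∈ Finset.univ (α := A), p k a * Real.exp (-η * q k a) ≤
          p k a * (1 - η * q k a + (η * q k a) ^ 2 / 2) := by
        intro a _
        apply mul_le_mul_of_nonneg_left _ (le_of_lt (hpos k hk1 a))
        have hx : 0 ≤ η * q k a := mul_nonneg (le_of_lt hη) (hq k hk a).1
        have := exp_neg_le_quad (η * q k a) hx
        rw [← neg_mul] at this
        exact this
      calc Z k ≤ ∑ a, p k a * (1 - η * q k a + (η * q k a) ^ 2 / 2) :=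
            Finset.sum_le_sum hterm
        _ = (∑ a, p k a) - η * (∑ a, q k a * p k a) + η ^ 2 / 2 * ∑ a, p k a * (q k a) ^ 2 := by
            rw [Finset.mul_sum, Finset.mul_sum, ← Finset.sum_sub_distrib, ← Finset.sum_add_distrib]
            exact Finset.sum_congr rfl (fun a _ => by ring)
        _ = 1 - η * (∑ a, q k a * p k a) + η ^ 2 / 2 * ∑ a, p k a * (q k a) ^ 2 := by
            rw [hsum1 k hk1]
    calc Real.log (Z k) ≤ Z k - 1 := Real.log_le_sub_one_of_pos (hZpos k hk1)
      _ ≤ -η * (∑ a, q k a * p k a) + η ^ 2 / 2 * ∑ a, p k a * (q k a) ^ 2 := by linarith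
  -- telescoping identity
  have htel : ∀ n : ℕ, ∀ a, Real.log (p (n + 1) a) =
      Real.log (p 1 a) + ∑ j ∈ Finset.Icc 1 n, (-η * q j a - Real.log (Z j)) := by
    intro n
    induction n with
    | zero => intro a; simp
    | succ n ih =>
      intro a
      have h1 : (1:ℕ) ≤ n + 1 := Nat.le_add_left 1 n
      rw [hrec (n + 1) h1 a]
      rw [Real.log_div (ne_of_gt (mul_pos (hpos (n+1) h1 a) (Real.exp_pos _))) (ne_of_gt (hZpos (n+1) h1))]
      rw [Real.log_mul (ne_of_gt (hpos (n+1) h1 a)) (ne_of_gt (Real.exp_pos _))]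
      rw [Real.log_exp, ih a]
      rw [Finset.sum_Icc_succ_top h1]
      ring
  -- the key inequality for a fixed comparator point astar
  have hkey : ∀ astar : A,
      (∑ k ∈ Finset.Icc 1 K, ∑ a, q k a * p k a) - ∑ k ∈ Finset.Icc 1 K, q k astar ≤
        Real.log (Fintype.card A) / η
          + η / 2 * ∑ k ∈ Finset.Icc 1 K, ∑ a, p k a * (q k a) ^ 2 := by
    intro astar
    have hple1 : p (K + 1) astar ≤ 1 := by
      rw [← hsum1 (K+1) (Nat.le_add_left 1 K)]
      exact Finset.single_le_sum (fun a _ => le_of_lt (hpos (K+1) (Nat.le_add_left 1 K) a))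
        (Finset.mem_univ astar)
    have hlog0 : Real.log (p (K + 1) astar) ≤ 0 :=
      Real.log_nonpos (le_of_lt (hpos (K+1) (Nat.le_add_left 1 K) astar)) hple1
    have htelK := htel K astar
    have hlogp1 : Real.log (p 1 astar) = -Real.log (Fintype.card A) := by
      rw [hp1, one_div, Real.log_inv]
    rw [htelK, hlogp1, Finset.sum_sub_distrib] at hlog0
    -- hlog0 : -log N + (∑ -η q j astar) - ∑ log Z j ≤ 0
    have hsumstep : ∑ k ∈ Finset.Icc 1 K,
        (-η * (∑ a, q k a * p k a) + η ^ 2 / 2 * ∑ a, p k a * (q k a) ^ 2) ≥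
        ∑ k ∈ Finset.Icc 1 K, Real.log (Z k) := Finset.sum_le_sum hstep
    rw [Finset.sum_add_distrib] at hsumstep
    have e1 : ∑ k ∈ Finset.Icc 1 K, -η * (∑ a, q k a * p k a)
        = -η * ∑ k ∈ Finset.Icc 1 K, ∑ a, q k a * p k a := by
      rw [Finset.mul_sum]
    have e2 : ∑ k ∈ Finset.Icc 1 K, η ^ 2 / 2 * ∑ a, p k a * (q k a) ^ 2
        = η ^ 2 / 2 * ∑ k ∈ Finset.Icc 1 K, ∑ a, p k a * (q k a) ^ 2 := by
      rw [Finset.mul_sum]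
    have e3 : ∑ k ∈ Finset.Icc 1 K, -η * q k astar
        = -η * ∑ k ∈ Finset.Icc 1 K, q k astar := by
      rw [Finset.mul_sum]
    rw [e1, e2] at hsumstep
    rw [e3] at hlog0
    rw [ge_iff_le] at hsumstep
    rw [div_add' _ _ _ (ne_of_gt hη)]
    rw [le_div_iff₀ hη]
    nlinarith [hsumstep, hlog0]
  -- part (i) as a standalone fact
  have hpart1 : ∀ pp : A → ℝ, (∀ a, 0 ≤ pp a) → (∀ a, pp a ≤ 1) → ∑ a, pp a = 1 →
      ∑ k ∈ Finset.Icc 1 K, ∑ a, q k a * (p k a - pp a) ≤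
        Real.log (Fintype.card A) / η
          + η / 2 * ∑ k ∈ Finset.Icc 1 K, ∑ a, p k a * (q k a) ^ 2 := by
    intro pp hpp0 _ hpps
    obtain ⟨astar, -, hmin⟩ := Finset.exists_min_image Finset.univ
      (fun a => ∑ k ∈ Finset.Icc 1 K, q k a) Finset.univ_nonempty
    have h1 : ∑ k ∈ Finset.Icc 1 K, ∑ a, q k a * (p k a - pp a)
        = (∑ k ∈ Finset.Icc 1 K, ∑ a, q k a * p k a)
          - ∑ a, (∑ k ∈ Finset.Icc 1 K, q k a) * pp a := by
      simp only [mul_sub, Finset.sum_sub_distrib]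
      congr 1
      rw [Finset.sum_comm]
      exact Finset.sum_congr rfl (fun a _ => (Finset.sum_mul _ _ _).symm)
    have h2 : (∑ k ∈ Finset.Icc 1 K, q k astar) ≤ ∑ a, (∑ k ∈ Finset.Icc 1 K, q k a) * pp a := by
      calc (∑ k ∈ Finset.Icc 1 K, q k astar)
          = (∑ k ∈ Finset.Icc 1 K, q k astar) * ∑ a, pp a := by rw [hpps, mul_one]
        _ = ∑ a, (∑ k ∈ Finset.Icc 1 K, q k astar) * pp a := by rw [Finset.mul_sum]
        _ ≤ ∑ a, (∑ k ∈ Finset.Icc 1 K, q k a) * pp a :=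
            Finset.sum_le_sum (fun a _ =>
              mul_le_mul_of_nonneg_right (hmin a (Finset.mem_univ a)) (hpp0 a))
    rw [h1]
    have := hkey astar
    linarith
  refine ⟨hpart1, ?_⟩
  -- part (ii)
  intro hηeq pp hpp0 hpp1 hpps
  set L := Real.log (Fintype.card A) with hLdef
  have hcard1 : 1 ≤ Fintype.card A := Fintype.card_pos
  have hL0 : 0 ≤ L := Real.log_nonneg (by exact_mod_cast hcard1)
  have hcard2 : 2 ≤ Fintype.card A := by
    by_contra hcon
    have h1 : Fintype.card A = 1 := by omega
    have hL : L = 0 := by rw [hLdef, h1]; simp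
    rw [hηeq, hL] at hη
    simp at hη
  have hLpos : 0 < L := Real.log_pos (by exact_mod_cast hcard2)
  have hKpos : (0:ℝ) < (K:ℝ) := by exact_mod_cast Nat.lt_of_lt_of_le Nat.zero_lt_one hK
  have hη2 : η ^ 2 = 2 * L / (H ^ 2 * (K:ℝ)) := by
    rw [hηeq]; exact Real.sq_sqrt (by positivity)
  have hqbound : ∑ k ∈ Finset.Icc 1 K, ∑ a, p k a * (q k a) ^ 2 ≤ (K:ℝ) * H ^ 2 := by
    have hinner : ∀ k ∈ Finset.Icc 1 K, ∑ a, p k a * (q k a) ^ 2 ≤ H ^ 2 := by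
      intro k hk
      have hk1 : 1 ≤ k := (Finset.mem_Icc.mp hk).1
      calc ∑ a, p k a * (q k a) ^ 2 ≤ ∑ a, p k a * H ^ 2 := by
            apply Finset.sum_le_sum
            intro a _
            apply mul_le_mul_of_nonneg_left _ (le_of_lt (hpos k hk1 a))
            have h1 := (hq k hk a).1
            have h2 := (hq k hk a).2
            nlinarith
        _ = H ^ 2 := by rw [← Finset.sum_mul, hsum1 k hk1, one_mul]
    calc ∑ k ∈ Finset.Icc 1 K, ∑ a, p k a * (q k a) ^ 2
        ≤ ∑ _k ∈ Finset.Icc 1 K, H ^ 2 := Finset.sum_le_sum hinner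
      _ = (K:ℝ) * H ^ 2 := by
          rw [Finset.sum_const, Nat.card_Icc]
          simp [nsmul_eq_mul]
  have hfinal : L / η + η / 2 * ((K:ℝ) * H ^ 2)
      = Real.sqrt (2 * H ^ 2 * K * L) := by
    have hval : L / η + η / 2 * ((K:ℝ) * H ^ 2) = 2 * L / η := by
      have hmul : η ^ 2 * (H ^ 2 * (K:ℝ)) = 2 * L := by
        rw [hη2]; field_simp
      field_simp
      nlinarith [hmul]
    have hsq : (2 * L / η) ^ 2 = 2 * H ^ 2 * K * L := by
      have hmul : η ^ 2 * (H ^ 2 * (K:ℝ)) = 2 * L := by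
        rw [hη2]; field_simp
      field_simp
      nlinarith [hmul]
    rw [hval, ← hsq, Real.sqrt_sq (by positivity)]
  have hb := hpart1 pp hpp0 hpp1 hpps
  have hmono : η / 2 * ∑ k ∈ Finset.Icc 1 K, ∑ a, p k a * (q k a) ^ 2
      ≤ η / 2 * ((K:ℝ) * H ^ 2) :=
    mul_le_mul_of_nonneg_left hqbound (by positivity)
  calc ∑ k ∈ Finset.Icc 1 K, ∑ a, q k a * (p k a - pp a)
      ≤ L / η + η / 2 * ∑ k ∈ Finset.Icc 1 K, ∑ a, p k a * (q k a) ^ 2 := hb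
    _ ≤ L / η + η / 2 * ((K:ℝ) * H ^ 2) := by linarith
    _ = Real.sqrt (2 * H ^ 2 * K * L) := hfinal
end

section
/- Let D be a finite nonempty set with d = |D|, let K, H ≥ 1 be integers, and let x : {1,…,K} × {1,…,H} → D be any function. Define N(k,h) := #{ j ∈ {1,…,k−1} : x(j,h) = x(k,h) }. Then ∑_{k=1}^K ∑_{h=1}^H 1/√(max(1, N(k,h))) ≤ 2·√(d·H·K·H) + d·H. -/
open Finset

private lemma aux_inv_sqrt_step (n : ℕ) :
    (1 : ℝ) / Real.sqrt (n + 1) ≤ 2 * Real.sqrt (n + 1) - 2 * Real.sqrt n := by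
  have ha : Real.sqrt n ≥ 0 := Real.sqrt_nonneg _
  have hb : Real.sqrt (n + 1) > 0 := Real.sqrt_pos.2 (by positivity)
  have ha2 : Real.sqrt n ^ 2 = (n : ℝ) := Real.sq_sqrt (by positivity)
  have hb2 : Real.sqrt (n + 1) ^ 2 = (n : ℝ) + 1 := Real.sq_sqrt (by positivity)
  rw [div_le_iff₀ hb]
  nlinarith [sq_nonneg (Real.sqrt (n+1) - Real.sqrt n),
    sq_nonneg (Real.sqrt n * Real.sqrt (n+1) - (n : ℝ) - 1/2),
    mul_nonneg ha hb.le]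

private lemma aux_sum_range_inv_sqrt (n : ℕ) :
    ∑ i ∈ Finset.range n, (1 : ℝ) / Real.sqrt (max 1 (i : ℝ))
      ≤ 1 + 2 * Real.sqrt n := by
  have main : ∀ m : ℕ, ∑ i ∈ Finset.range (m + 1),
      (1 : ℝ) / Real.sqrt (max 1 (i : ℝ)) ≤ 1 + 2 * Real.sqrt m := by
    intro m
    induction m with
    | zero => simp
    | succ m ih =>
      rw [Finset.sum_range_succ]
      have hmax : max (1 : ℝ) ((m + 1 : ℕ) : ℝ) = ((m : ℝ) + 1) := by
        have h0 : (0 : ℝ) ≤ (m : ℝ) := Nat.cast_nonneg m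
        push_cast
        exact max_eq_right (by linarith)
      rw [hmax]
      have := aux_inv_sqrt_step m
      have : (1 : ℝ) / Real.sqrt ((m : ℝ) + 1)
          ≤ 2 * Real.sqrt ((m + 1 : ℕ) : ℝ) - 2 * Real.sqrt m := by
        push_cast
        exact aux_inv_sqrt_step m
      linarith
  cases n with
  | zero => simp
  | succ m =>
    calc ∑ i ∈ Finset.range (m + 1), (1 : ℝ) / Real.sqrt (max 1 (i : ℝ))
        ≤ 1 + 2 * Real.sqrt m := main m
      _ ≤ 1 + 2 * Real.sqrt ((m + 1 : ℕ) : ℝ) := by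
          have hc : ((m + 1 : ℕ) : ℝ) = (m : ℝ) + 1 := by push_cast; ring
          rw [hc]
          have := Real.sqrt_le_sqrt (show (m : ℝ) ≤ (m : ℝ) + 1 by linarith)
          linarith

/-- Summing `f` of the rank over a finset of naturals equals summing over a range. -/
private lemma aux_sum_rank (T : Finset ℕ) (f : ℕ → ℝ) :
    ∑ k ∈ T, f ((T.filter (fun j => j < k)).card)
      = ∑ i ∈ Finset.range T.card, f i := by
  classical
  set r : ℕ → ℕ := fun k => (T.filter (fun j => j < k)).card with hr
  have hmono : ∀ k ∈ T, ∀ k' ∈ T, k < k' → r k < r k' := by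
    intro k hk k' hk' hlt
    apply Finset.card_lt_card
    constructor
    · intro j hj
      rcases Finset.mem_filter.1 hj with ⟨hjT, hjk⟩
      exact Finset.mem_filter.2 ⟨hjT, lt_trans hjk hlt⟩
    · intro hsub
      have : k ∈ T.filter (fun j => j < k') := Finset.mem_filter.2 ⟨hk, hlt⟩
      have := hsub this
      exact absurd (Finset.mem_filter.1 this).2 (lt_irrefl k)
  have hinj : ∀ a ∈ T, ∀ b ∈ T, r a = r b → a = b := by
    intro a ha b hb hab
    rcases lt_trichotomy a b with h | h | h
    · exact absurd hab (Nat.ne_of_lt (hmono a ha b hb h))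
    · exact h
    · exact absurd hab.symm (Nat.ne_of_lt (hmono b hb a ha h))
  have hlt : ∀ k ∈ T, r k < T.card := by
    intro k hk
    apply Finset.card_lt_card
    constructor
    · exact Finset.filter_subset _ _
    · intro hsub
      have := hsub hk
      exact absurd (Finset.mem_filter.1 this).2 (lt_irrefl k)
  have himg : T.image r = Finset.range T.card := by
    apply Finset.eq_of_subset_of_card_le
    · intro i hi
      rcases Finset.mem_image.1 hi with ⟨k, hk, rfl⟩
      exact Finset.mem_range.2 (hlt k hk)
    · rw [Finset.card_range, Finset.card_image_of_injOn hinj]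
  rw [← himg, Finset.sum_image hinj]

/-- Deterministic pigeonhole bound on the sum of inverse square roots of visit
counts: for any assignment `x (k, h) ∈ D` of visited elements,
`∑_{k=1}^K ∑_{h=1}^H 1/√(max(1, N(k,h))) ≤ 2√(d·H·K·H) + d·H`, where
`N(k,h)` counts the previous episodes `j < k` with `x(j,h) = x(k,h)`. -/
theorem sum_inv_sqrt_visit_counts
    {D : Type*} [Fintype D] [Nonempty D] [DecidableEq D]
    (K H : ℕ) (hK : 1 ≤ K) (hH : 1 ≤ H) (x : ℕ → ℕ → D) :
    ∑ k ∈ Finset.Icc 1 K, ∑ h ∈ Finset.Icc 1 H,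
      (1 : ℝ) / Real.sqrt (max 1
        ((((Finset.Icc 1 (k - 1)).filter (fun j => x j h = x k h)).card : ℝ)))
      ≤ 2 * Real.sqrt ((Fintype.card D : ℝ) * H * K * H)
          + (Fintype.card D : ℝ) * H := by
  classical
  rw [Finset.sum_comm]
  set fib : ℕ → D → Finset ℕ :=
    fun h s => (Finset.Icc 1 K).filter (fun k => x k h = s) with hfib
  -- step 1: bound the inner sum for each h
  have step1 : ∀ h, ∑ k ∈ Finset.Icc 1 K,
      (1 : ℝ) / Real.sqrt (max 1
        ((((Finset.Icc 1 (k - 1)).filter (fun j => x j h = x k h)).card : ℝ)))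
      ≤ ∑ s : D, (1 + 2 * Real.sqrt ((fib h s).card)) := by
    intro h
    rw [← Finset.sum_fiberwise (Finset.Icc 1 K) (fun k => x k h)
      (fun k => (1 : ℝ) / Real.sqrt (max 1
        ((((Finset.Icc 1 (k - 1)).filter (fun j => x j h = x k h)).card : ℝ))))]
    apply Finset.sum_le_sum
    intro s _
    have hcongr : ∀ k ∈ fib h s,
        ((Finset.Icc 1 (k - 1)).filter (fun j => x j h = x k h)).card
          = ((fib h s).filter (fun j => j < k)).card := by
      intro k hk
      rcases Finset.mem_filter.1 hk with ⟨hkI, hks⟩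
      rcases Finset.mem_Icc.1 hkI with ⟨hk1, hkK⟩
      congr 1
      ext j
      simp only [Finset.mem_filter, Finset.mem_Icc, hfib, hks]
      by_cases hx : x j h = s <;> simp [hx] <;> omega
    calc ∑ k ∈ (Finset.Icc 1 K).filter (fun k => x k h = s),
          (1 : ℝ) / Real.sqrt (max 1
            ((((Finset.Icc 1 (k - 1)).filter (fun j => x j h = x k h)).card : ℝ)))
        = ∑ k ∈ fib h s, (1 : ℝ) / Real.sqrt (max 1
            ((((fib h s).filter (fun j => j < k)).card : ℝ)) ) := by
          apply Finset.sum_congr rfl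
          intro k hk
          rw [hcongr k hk]
      _ = ∑ i ∈ Finset.range (fib h s).card,
            (1 : ℝ) / Real.sqrt (max 1 (i : ℝ)) :=
          aux_sum_rank (fib h s) (fun n => (1 : ℝ) / Real.sqrt (max 1 (n : ℝ)))
      _ ≤ 1 + 2 * Real.sqrt ((fib h s).card) := aux_sum_range_inv_sqrt _
  -- step 2: sum over h and apply Cauchy-Schwarz
  have step2 : ∑ h ∈ Finset.Icc 1 H, ∑ s : D, (1 + 2 * Real.sqrt ((fib h s).card))
      ≤ 2 * Real.sqrt ((Fintype.card D : ℝ) * H * K * H)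
          + (Fintype.card D : ℝ) * H := by
    have hsplit : ∑ h ∈ Finset.Icc 1 H, ∑ s : D, (1 + 2 * Real.sqrt ((fib h s).card))
        = (Fintype.card D : ℝ) * H
          + 2 * ∑ h ∈ Finset.Icc 1 H, ∑ s : D, Real.sqrt ((fib h s).card) := by
      simp [Finset.sum_add_distrib, Finset.mul_sum, Finset.sum_mul, Nat.card_Icc]
      ring
    rw [hsplit]
    have hCS : ∑ h ∈ Finset.Icc 1 H, ∑ s : D, Real.sqrt ((fib h s).card)
        ≤ Real.sqrt ((Fintype.card D : ℝ) * H * K * H) := by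
      have hnn : (0 : ℝ) ≤ ∑ h ∈ Finset.Icc 1 H, ∑ s : D, Real.sqrt ((fib h s).card) :=
        Finset.sum_nonneg fun _ _ => Finset.sum_nonneg fun _ _ => Real.sqrt_nonneg _
      rw [← Real.sqrt_sq hnn]
      apply Real.sqrt_le_sqrt
      -- rewrite double sum as sum over product
      rw [← Finset.sum_product']
      calc (∑ p ∈ (Finset.Icc 1 H) ×ˢ (Finset.univ : Finset D),
              Real.sqrt ((fib p.1 p.2).card)) ^ 2
          ≤ ((Finset.Icc 1 H) ×ˢ (Finset.univ : Finset D)).card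
              * ∑ p ∈ (Finset.Icc 1 H) ×ˢ (Finset.univ : Finset D),
                  Real.sqrt ((fib p.1 p.2).card) ^ 2 :=
            sq_sum_le_card_mul_sum_sq
        _ ≤ (Fintype.card D : ℝ) * H * K * H := by
            have hsq : ∀ p ∈ (Finset.Icc 1 H) ×ˢ (Finset.univ : Finset D),
                Real.sqrt ((fib p.1 p.2).card) ^ 2 = ((fib p.1 p.2).card : ℝ) := by
              intro p _
              exact Real.sq_sqrt (by positivity)
            rw [Finset.sum_congr rfl hsq]
            have hcard : (((Finset.Icc 1 H) ×ˢ (Finset.univ : Finset D)).card : ℝ)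
                = H * (Fintype.card D : ℝ) := by
              push_cast [Finset.card_product, Nat.card_Icc]
              simp [Finset.card_univ]
            have hsum : ∑ p ∈ (Finset.Icc 1 H) ×ˢ (Finset.univ : Finset D),
                ((fib p.1 p.2).card : ℝ) = (H : ℝ) * K := by
              rw [Finset.sum_product]
              have : ∀ h ∈ Finset.Icc 1 H,
                  ∑ s : D, ((fib h s).card : ℝ) = (K : ℝ) := by
                intro h _
                have := Finset.card_eq_sum_card_fiberwise
                  (f := fun k => x k h) (s := Finset.Icc 1 K)
                  (t := (Finset.univ : Finset D)) (fun _ _ => Finset.mem_univ _)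
                have hK' : (K : ℝ) = ((Finset.Icc 1 K).card : ℝ) := by
                  simp [Nat.card_Icc]
                rw [hK', this]
                push_cast
                ring
              rw [Finset.sum_congr rfl this]
              simp [Nat.card_Icc]
            rw [hcard, hsum]
            exact le_of_eq (by ring)
      
    linarith
  calc ∑ h ∈ Finset.Icc 1 H, ∑ k ∈ Finset.Icc 1 K,
        (1 : ℝ) / Real.sqrt (max 1
          ((((Finset.Icc 1 (k - 1)).filter (fun j => x j h = x k h)).card : ℝ)))
      ≤ ∑ h ∈ Finset.Icc 1 H, ∑ s : D, (1 + 2 * Real.sqrt ((fib h s).card)) :=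
        Finset.sum_le_sum fun h _ => step1 h
    _ ≤ _ := step2
end
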